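/- arXiv:2103.16853 — 11 statements merged into one kernel-verified Lean document; each statement's English description precedes it below -/
import Mathlib

section
/- For every integer p ≥ 3, one has (p - 1)·α_p^{p-2} > 1; equivalently, setting β_p = α_p^{p-2}, one has (1 - p)·β_p < -1. -/
/-!
Write `n = p - 1 ≥ 2`, so that `α ^ n + α = 1`. Multiplying the claim by `α` turns it into
`n * (1 - α) > α`, i.e. `α < n / (n + 1)`. Since `x ↦ x ^ n + x` is increasing on `[0, ∞)`,
this holds as soon as `(n / (n + 1)) ^ n > 1 / (n + 1)`, which is the strict Bernoulli inequality
for `(1 - 1 / (n + 1)) ^ n`.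
-/

lemma one_div_add_one_lt_div_add_one_pow {n : ℕ} (hn : 2 ≤ n) :
    1 / ((n : ℝ) + 1) < ((n : ℝ) / (n + 1)) ^ n := by
  have hs : (-1 : ℝ) ≤ -1 / (n + 1) := by
    rw [le_div_iff₀ (by positivity)]
    linarith
  have hbernoulli := one_add_mul_self_lt_rpow_one_add hs (by positivity) (p := n)
    (by exact_mod_cast hn)
  rw [Real.rpow_natCast] at hbernoulli
  convert hbernoulli using 1 <;> field_simp <;> ring

lemma lt_div_add_one_of_pow_add_self_eq_one {n : ℕ} (hn : 2 ≤ n) {α : ℝ}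
    (h : α ^ n + α = 1) : α < n / (n + 1) := by
  by_contra! hle
  have hpow : ((n : ℝ) / (n + 1)) ^ n ≤ α ^ n := pow_le_pow_left₀ (by positivity) hle n
  have hcompl : 1 - α ≤ 1 / ((n : ℝ) + 1) := by
    have : (1 : ℝ) / (n + 1) = 1 - n / (n + 1) := by field_simp; ring
    linarith
  linarith [one_div_add_one_lt_div_add_one_pow hn]

lemma one_lt_mul_pow_sub_one_of_pow_add_self_eq_one {n : ℕ} (hn : 2 ≤ n) {α : ℝ} (hα : 0 < α)
    (h : α ^ n + α = 1) : 1 < n * α ^ (n - 1) := by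
  have hlt := lt_div_add_one_of_pow_add_self_eq_one hn h
  rw [lt_div_iff₀ (by positivity)] at hlt
  have hmul : n * α ^ (n - 1) * α = n * (1 - α) := by
    rw [mul_assoc, ← pow_succ, Nat.sub_add_cancel (by omega), eq_sub_of_add_eq h]
  refine lt_of_mul_lt_mul_right ?_ hα.le
  rw [hmul]
  linarith

theorem alpha_pow_ineq (p : ℕ) (hp : 3 ≤ p) (α : ℝ)
    (hα : α ∈ Set.Ioo (0 : ℝ) 1) (hroot : α ^ (p - 1) + α - 1 = 0) :
    ((p : ℝ) - 1) * α ^ (p - 2) > 1 ∧ (1 - (p : ℝ)) * α ^ (p - 2) < -1 := by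
  have key := one_lt_mul_pow_sub_one_of_pow_add_self_eq_one (n := p - 1) (by omega) hα.1
    (by linarith)
  rw [Nat.cast_sub (by omega), Nat.sub_sub, Nat.cast_one] at key
  constructor <;> linarith
end

section
/- (Theorem 1, uniqueness of the stationary point.) Let p ≥ 3 be an integer. A point ω = (ω_1,…,ω_p) ∈ (0,1)^p satisfies ω_k = 1 - ∏_{i ≠ k} ω_i for every k ∈ {1,…,p} if and only if ω_k = α_p for every k ∈ {1,…,p}. Equivalently, the derived barypolygonal system t_k ↦ ∏_{i ≠ k}(1 - t_i) has exactly one fixed point in (0,1)^p, namely the point all of whose coordinates equal 1 - α_p. -/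
/-!
At a fixed point every coordinate satisfies `ω k * (1 - ω k) = ∏ i, ω i`, so any two coordinates
are either equal or sum to `1`. If `ω j = 1 - ω k` with `j ≠ k`, then the fixed-point equation at `k`
reads `ω j = ∏ i ≠ k, ω i`; since `p ≥ 3` this product has a further factor in `(0, 1)`, so it is
strictly smaller than `ω j`. Hence all coordinates are equal to some `c` with `c ^ (p - 1) + c = 1`,
and `x ↦ x ^ (p - 1) + x` is strictly increasing on `[0, ∞)`.
-/

open Finset

section Ordered

variable {ι R : Type*} [CommRing R] [LinearOrder R] [IsStrictOrderedRing R]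

lemma Finset.prod_lt_of_one_lt_card {s : Finset ι} {f : ι → R} (hf : ∀ i ∈ s, f i ∈ Set.Ioo 0 1)
    (hs : 1 < #s) {j : ι} (hj : j ∈ s) : ∏ i ∈ s, f i < f j := by
  classical
  have hne : (s.erase j).Nonempty := by
    rw [← card_pos, card_erase_of_mem hj]
    omega
  have hlt : ∏ i ∈ s.erase j, f i < 1 := by
    calc ∏ i ∈ s.erase j, f i < ∏ _i ∈ s.erase j, (1 : R) :=
          prod_lt_prod_of_nonempty (fun i hi => (hf i (mem_of_mem_erase hi)).1)
            (fun i hi => (hf i (mem_of_mem_erase hi)).2) hne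
      _ = 1 := prod_const_one
  rw [← mul_prod_erase s f hj]
  exact mul_lt_of_lt_one_right (hf j hj).1 hlt

lemma injOn_pow_add_self (n : ℕ) : Set.InjOn (fun x : R => x ^ n + x) (Set.Ici 0) :=
  (pow_left_monotoneOn.add_strictMono (strictMono_id.strictMonoOn _)).injOn

end Ordered

lemma eq_or_eq_one_sub_of_mul_one_sub_eq {R : Type*} [CommRing R] [NoZeroDivisors R] {a b : R}
    (h : a * (1 - a) = b * (1 - b)) : a = b ∨ a = 1 - b := by
  have : (a - b) * (a - (1 - b)) = 0 := by linear_combination -h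
  rcases mul_eq_zero.1 this with hab | hab
  · exact Or.inl (sub_eq_zero.1 hab)
  · exact Or.inr (sub_eq_zero.1 hab)

section FixedPoint

variable {ι R : Type*} [Fintype ι] [DecidableEq ι]

lemma prod_erase_univ_of_forall_eq {M : Type*} [CommMonoid M] {ω : ι → M} {c : M}
    (h : ∀ i, ω i = c) (k : ι) : ∏ i ∈ univ.erase k, ω i = c ^ (Fintype.card ι - 1) := by
  rw [prod_congr rfl fun i _ => h i, prod_const, card_erase_of_mem (mem_univ k), card_univ]

lemma mul_one_sub_eq_prod_of_fixed [CommRing R] {ω : ι → R}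
    (hfix : ∀ k, ω k = 1 - ∏ i ∈ univ.erase k, ω i) (k : ι) :
    ω k * (1 - ω k) = ∏ i, ω i := by
  rw [← mul_prod_erase univ ω (mem_univ k)]
  linear_combination -ω k * hfix k

lemma eq_of_fixed [CommRing R] [LinearOrder R] [IsStrictOrderedRing R] (hcard : 3 ≤ Fintype.card ι)
    {ω : ι → R} (hω : ∀ k, ω k ∈ Set.Ioo 0 1) (hfix : ∀ k, ω k = 1 - ∏ i ∈ univ.erase k, ω i)
    (j k : ι) : ω j = ω k := by
  rcases eq_or_ne j k with rfl | hjk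
  · rfl
  refine (eq_or_eq_one_sub_of_mul_one_sub_eq ?_).resolve_right fun hj => ?_
  · rw [mul_one_sub_eq_prod_of_fixed hfix, mul_one_sub_eq_prod_of_fixed hfix]
  · have hlt : ∏ i ∈ univ.erase k, ω i < ω j :=
      prod_lt_of_one_lt_card (fun i _ => hω i)
        (by rw [card_erase_of_mem (mem_univ k), card_univ]; omega) (mem_erase.2 ⟨hjk, mem_univ j⟩)
    linarith [hfix k]

end FixedPoint

theorem fixed_point_characterization (p : ℕ) (hp : 3 ≤ p) (α : ℝ)
    (hα : α ∈ Set.Ioo (0 : ℝ) 1) (hroot : α ^ (p - 1) + α - 1 = 0)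
    (ω : Fin p → ℝ) (hω : ∀ k, ω k ∈ Set.Ioo (0 : ℝ) 1) :
    (∀ k : Fin p, ω k = 1 - ∏ i ∈ Finset.univ.erase k, ω i) ↔ (∀ k : Fin p, ω k = α) := by
  constructor
  · intro hfix k
    have hconst : ∀ i, ω i = ω k := fun i => eq_of_fixed (by simpa using hp) hω hfix i k
    have hk := hfix k
    rw [prod_erase_univ_of_forall_eq hconst, Fintype.card_fin] at hk
    exact injOn_pow_add_self (p - 1) (hω k).1.le hα.1.le (by simp only; linarith)
  · intro h k
    rw [prod_erase_univ_of_forall_eq h, Fintype.card_fin, h k]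
    linarith
end

section
/- (Lemma (a).) Let p ≥ 3 be an integer and suppose the initial point satisfies 0 < u_1^{(0)} ≤ u_2^{(0)} ≤ … ≤ u_p^{(0)} < 1. Then for every m ∈ ℕ one has 0 < u_1^{(m)} ≤ u_2^{(m)} ≤ … ≤ u_p^{(m)} < 1. In particular the open cube (0,1)^p is invariant under F and F preserves the (weak) ordering of coordinates. -/
theorem lemma_a (p : ℕ) (hp : 3 ≤ p) (u : ℕ → Fin p → ℝ)
    (hrec : ∀ m : ℕ, ∀ k : Fin p,
      u (m + 1) k = 1 - ∏ i ∈ Finset.univ.erase k, u m i)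
    (h0 : ∀ k : Fin p, u 0 k ∈ Set.Ioo (0 : ℝ) 1)
    (hmono : Monotone (u 0)) :
    ∀ m : ℕ, (∀ k : Fin p, u m k ∈ Set.Ioo (0 : ℝ) 1) ∧ Monotone (u m) := by
  intro m
  induction m with
  | zero => exact ⟨h0, hmono⟩
  | succ m ih =>
    obtain ⟨hio, hm⟩ := ih
    have hpos : ∀ k : Fin p, 0 < ∏ i ∈ Finset.univ.erase k, u m i := fun k =>
      Finset.prod_pos (fun i _ => (hio i).1)
    have hne : ∀ k : Fin p, (Finset.univ.erase k).Nonempty := by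
      intro k
      rw [← Finset.card_pos, Finset.card_erase_of_mem (Finset.mem_univ k),
        Finset.card_univ, Fintype.card_fin]
      omega
    have hlt1 : ∀ k : Fin p, ∏ i ∈ Finset.univ.erase k, u m i < 1 := by
      intro k
      have := Finset.prod_lt_prod_of_nonempty (g := fun _ => (1 : ℝ))
        (fun i _ => (hio i).1) (fun i _ => (hio i).2) (hne k)
      simpa using this
    refine ⟨fun k => ?_, fun j k hjk => ?_⟩
    · rw [hrec m k]
      exact ⟨by linarith [hlt1 k], by linarith [hpos k]⟩
    · rw [hrec m j, hrec m k]
      have hP : (∏ i ∈ Finset.univ.erase j, u m i) * u m j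
          = (∏ i ∈ Finset.univ.erase k, u m i) * u m k := by
        rw [Finset.prod_erase_mul _ _ (Finset.mem_univ j),
            Finset.prod_erase_mul _ _ (Finset.mem_univ k)]
      have huj := hm hjk
      nlinarith [hpos j, hpos k, (hio j).1, (hio k).1]
end

section
/- Let p ≥ 3 be an integer and let u ∈ ℝ^p with π = ∏_{r=1}^{p} u_r. For all indices k ≠ l in {1,…,p}, the second iterate of F satisfies F(F(u))_k - F(F(u))_l = (u_k - u_l)·∏_{r ∉ {k,l}} (u_r - π); in particular there exist reals K (namely K = ∏_{r ∉ {k,l}}(u_r - π)) and C such that F(F(u))_k = K·u_k + C and F(F(u))_l = K·u_l + C. -/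
theorem second_iterate_affine (p : ℕ) (hp : 3 ≤ p) (u : Fin p → ℝ)
    (F : (Fin p → ℝ) → Fin p → ℝ)
    (hF : ∀ v : Fin p → ℝ, ∀ k : Fin p, F v k = 1 - ∏ i ∈ Finset.univ.erase k, v i)
    (π : ℝ) (hπ : π = ∏ r : Fin p, u r)
    (k l : Fin p) (hkl : k ≠ l) :
    F (F u) k - F (F u) l
      = (u k - u l) * ∏ r ∈ (Finset.univ.erase k).erase l, (u r - π) ∧
    ∃ C : ℝ, F (F u) k = (∏ r ∈ (Finset.univ.erase k).erase l, (u r - π)) * u k + C ∧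
      F (F u) l = (∏ r ∈ (Finset.univ.erase k).erase l, (u r - π)) * u l + C := by
  classical
  set P : Fin p → ℝ := fun i => ∏ j ∈ Finset.univ.erase i, u j with hP
  have hlk : l ∈ Finset.univ.erase k := Finset.mem_erase.2 ⟨hkl.symm, Finset.mem_univ l⟩
  have hkl' : k ∈ Finset.univ.erase l := Finset.mem_erase.2 ⟨hkl, Finset.mem_univ k⟩
  have hSe : (Finset.univ.erase l).erase k = (Finset.univ.erase k).erase l :=
    Finset.erase_right_comm
  set S := (Finset.univ.erase k).erase l with hSdef
  set Q := ∏ r ∈ S, (1 - P r) with hQ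
  -- second iterate at k
  have hFk : F (F u) k = 1 - (1 - P l) * Q := by
    rw [hF]
    have h1 : ∏ i ∈ Finset.univ.erase k, F u i = ∏ i ∈ Finset.univ.erase k, (1 - P i) :=
      Finset.prod_congr rfl (fun i _ => hF u i)
    rw [h1, ← Finset.mul_prod_erase _ _ hlk]
  have hFl : F (F u) l = 1 - (1 - P k) * Q := by
    rw [hF]
    have h1 : ∏ i ∈ Finset.univ.erase l, F u i = ∏ i ∈ Finset.univ.erase l, (1 - P i) :=
      Finset.prod_congr rfl (fun i _ => hF u i)
    rw [h1, ← Finset.mul_prod_erase _ _ hkl', hSe]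
  -- products of u
  have hPl : P l = u k * ∏ r ∈ S, u r := by
    rw [hP]; dsimp only
    rw [← Finset.mul_prod_erase _ _ hkl', hSe]
  have hPk : P k = u l * ∏ r ∈ S, u r := by
    rw [hP]; dsimp only
    rw [← Finset.mul_prod_erase _ _ hlk]
  -- the key product identity
  have hKey : ∏ r ∈ S, (u r - π) = (∏ r ∈ S, u r) * Q := by
    rw [hQ, ← Finset.prod_mul_distrib]
    refine Finset.prod_congr rfl (fun r _ => ?_)
    have : u r * P r = π := by
      show u r * ∏ j ∈ Finset.univ.erase r, u j = π
      rw [hπ]; exact Finset.mul_prod_erase Finset.univ u (Finset.mem_univ r)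
    linear_combination this
  have hmain : F (F u) k - F (F u) l = (u k - u l) * ∏ r ∈ S, (u r - π) := by
    rw [hFk, hFl, hKey, hPl, hPk]; ring
  refine ⟨hmain, F (F u) k - (∏ r ∈ S, (u r - π)) * u k, by ring, ?_⟩
  linear_combination -hmain
end

section
/- (Lemma (b).) Let p ≥ 3 be an integer and suppose 0 < u_1^{(0)} ≤ u_2^{(0)} ≤ … ≤ u_p^{(0)} < 1. Then for every pair (k,l) with 1 ≤ k < l ≤ p and every m ∈ ℕ, one has u_k^{(m)}·u_l^{(m+2)} ≤ u_l^{(m)}·u_k^{(m+2)}; consequently, for each such pair the sequence q ↦ u_l^{(2q)} / u_k^{(2q)} is non-increasing and bounded below by 1, hence converges to a real limit L_{(k,l)} ≥ 1. -/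
theorem lemma_b (p : ℕ) (hp : 3 ≤ p) (u : ℕ → Fin p → ℝ)
    (hrec : ∀ m : ℕ, ∀ k : Fin p,
      u (m + 1) k = 1 - ∏ i ∈ Finset.univ.erase k, u m i)
    (h0 : ∀ k : Fin p, u 0 k ∈ Set.Ioo (0 : ℝ) 1)
    (hmono : Monotone (u 0)) :
    ∀ k l : Fin p, k < l →
      (∀ m : ℕ, u m k * u (m + 2) l ≤ u m l * u (m + 2) k) ∧
      Antitone (fun q : ℕ => u (2 * q) l / u (2 * q) k) ∧
      (∀ q : ℕ, 1 ≤ u (2 * q) l / u (2 * q) k) ∧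
      ∃ L : ℝ, 1 ≤ L ∧
        Filter.Tendsto (fun q : ℕ => u (2 * q) l / u (2 * q) k) Filter.atTop (nhds L) := by
  have hnt : Nontrivial (Fin p) := Fin.nontrivial_iff_two_le.mpr (by omega)
  -- all iterates stay in (0,1)
  have hpos : ∀ m, ∀ k : Fin p, u m k ∈ Set.Ioo (0 : ℝ) 1 := by
    intro m
    induction m with
    | zero => exact h0
    | succ m ih =>
      intro k
      obtain ⟨j, hj⟩ := exists_ne k
      have hjmem : j ∈ Finset.univ.erase k := by simp [hj]
      have hsplit : ∏ i ∈ Finset.univ.erase k, u m i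
          = u m j * ∏ i ∈ (Finset.univ.erase k).erase j, u m i :=
        (Finset.mul_prod_erase _ _ hjmem).symm
      have hrest1 : ∏ i ∈ (Finset.univ.erase k).erase j, u m i ≤ 1 :=
        Finset.prod_le_one (fun i _ => (ih i).1.le) (fun i _ => (ih i).2.le)
      have hrest0 : 0 < ∏ i ∈ (Finset.univ.erase k).erase j, u m i :=
        Finset.prod_pos (fun i _ => (ih i).1)
      have hlt : ∏ i ∈ Finset.univ.erase k, u m i < 1 := by
        rw [hsplit]
        calc u m j * ∏ i ∈ (Finset.univ.erase k).erase j, u m i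
            ≤ u m j * 1 := by
              exact mul_le_mul_of_nonneg_left hrest1 (ih j).1.le
          _ < 1 := by simpa using (ih j).2
      have hgt : 0 < ∏ i ∈ Finset.univ.erase k, u m i :=
        Finset.prod_pos (fun i _ => (ih i).1)
      rw [hrec]
      constructor <;> [linarith; linarith]
  -- monotonicity in k is preserved
  have hmon : ∀ m, Monotone (u m) := by
    intro m
    induction m with
    | zero => exact hmono
    | succ m ih =>
      intro k l hkl
      rcases eq_or_lt_of_le hkl with h | h
      · rw [h]
      · have hne : k ≠ l := ne_of_lt h
        have hlk : l ∈ Finset.univ.erase k := by simp [hne.symm]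
        have hkl' : k ∈ Finset.univ.erase l := by simp [hne]
        have hQk : ∏ i ∈ Finset.univ.erase k, u m i
            = u m l * ∏ i ∈ (Finset.univ.erase k).erase l, u m i :=
          (Finset.mul_prod_erase _ _ hlk).symm
        have hQl : ∏ i ∈ Finset.univ.erase l, u m i
            = u m k * ∏ i ∈ (Finset.univ.erase k).erase l, u m i := by
          rw [Finset.erase_right_comm]
          exact (Finset.mul_prod_erase _ _ hkl').symm
        have hR : 0 ≤ ∏ i ∈ (Finset.univ.erase k).erase l, u m i :=
          Finset.prod_nonneg (fun i _ => (hpos m i).1.le)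
        have hkl2 : u m k ≤ u m l := ih h.le
        rw [hrec, hrec, hQk, hQl]
        nlinarith
  -- the key inequality
  have key : ∀ m, ∀ k l : Fin p, k < l →
      u m k * u (m + 2) l ≤ u m l * u (m + 2) k := by
    intro m k l hkl
    have hne : k ≠ l := ne_of_lt hkl
    have hlk : l ∈ Finset.univ.erase k := by simp [hne.symm]
    have hkl' : k ∈ Finset.univ.erase l := by simp [hne]
    set a := u m with ha
    set b := u (m + 1) with hb
    set R := ∏ i ∈ (Finset.univ.erase k).erase l, b i with hRdef
    have hQk : ∏ i ∈ Finset.univ.erase k, b i = b l * R :=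
      (Finset.mul_prod_erase _ _ hlk).symm
    have hQl : ∏ i ∈ Finset.univ.erase l, b i = b k * R := by
      rw [hRdef, Finset.erase_right_comm]
      exact (Finset.mul_prod_erase _ _ hkl').symm
    have hck : u (m + 2) k = 1 - b l * R := by
      have := hrec (m + 1) k
      rw [← hQk]; exact this
    have hcl : u (m + 2) l = 1 - b k * R := by
      have := hrec (m + 1) l
      rw [← hQl]; exact this
    have habk : a k * b k = a k - ∏ i, a i := by
      rw [hb, hrec]
      have : a k * ∏ i ∈ Finset.univ.erase k, a i = ∏ i, a i :=
        Finset.mul_prod_erase _ _ (Finset.mem_univ k)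
      ring_nf
      linarith [this]
    have habl : a l * b l = a l - ∏ i, a i := by
      rw [hb, hrec]
      have : a l * ∏ i ∈ Finset.univ.erase l, a i = ∏ i, a i :=
        Finset.mul_prod_erase _ _ (Finset.mem_univ l)
      ring_nf
      linarith [this]
    have hR0 : 0 ≤ R := Finset.prod_nonneg (fun i _ => (hpos (m + 1) i).1.le)
    have hR1 : R ≤ 1 :=
      Finset.prod_le_one (fun i _ => (hpos (m + 1) i).1.le)
        (fun i _ => (hpos (m + 1) i).2.le)
    have hakl : a k ≤ a l := hmon m hkl.le
    rw [hck, hcl]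
    nlinarith [mul_nonneg (sub_nonneg.2 hakl) (sub_nonneg.2 hR1)]
  intro k l hkl
  have hk0 : ∀ q, 0 < u (2 * q) k := fun q => (hpos (2 * q) k).1
  have hl0 : ∀ q, 0 < u (2 * q) l := fun q => (hpos (2 * q) l).1
  have hAnti : Antitone (fun q : ℕ => u (2 * q) l / u (2 * q) k) := by
    apply antitone_nat_of_succ_le
    intro q
    have h := key (2 * q) k l hkl
    have h2 : 2 * (q + 1) = 2 * q + 2 := by ring
    rw [h2]
    rw [div_le_div_iff₀ (hpos (2 * q + 2) k).1 (hk0 q)]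
    nlinarith [h]
  have hBdd : ∀ q : ℕ, 1 ≤ u (2 * q) l / u (2 * q) k := by
    intro q
    rw [le_div_iff₀ (hk0 q), one_mul]
    exact hmon (2 * q) hkl.le
  refine ⟨fun m => key m k l hkl, hAnti, hBdd, ?_⟩
  have hbdd : BddBelow (Set.range fun q : ℕ => u (2 * q) l / u (2 * q) k) :=
    ⟨1, by rintro x ⟨q, rfl⟩; exact hBdd q⟩
  refine ⟨⨅ q : ℕ, u (2 * q) l / u (2 * q) k, ?_, ?_⟩
  · exact le_ciInf hBdd
  · exact tendsto_atTop_ciInf hAnti hbdd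
end

section
/- (Lemma (c).) Let p ≥ 4 be an integer and suppose 0 < u_1^{(0)} ≤ u_2^{(0)} ≤ … ≤ u_p^{(0)} < 1 with u_1^{(0)} < u_p^{(0)}. Then for every m ∈ ℕ one has u_1^{(m)} < u_p^{(m)} and ( u_p^{(m+2)} / u_1^{(m+2)} - 1 ) < (1/2) · ( u_p^{(m)} / u_1^{(m)} - 1 ). -/
theorem lemma_c (p : ℕ) (hp : 4 ≤ p) (u : ℕ → Fin p → ℝ)
    (hrec : ∀ m : ℕ, ∀ k : Fin p,
      u (m + 1) k = 1 - ∏ i ∈ Finset.univ.erase k, u m i)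
    (h0 : ∀ k : Fin p, u 0 k ∈ Set.Ioo (0 : ℝ) 1)
    (hmono : Monotone (u 0))
    (hirr : u 0 ⟨0, by omega⟩ < u 0 ⟨p - 1, by omega⟩) :
    ∀ m : ℕ,
      u m ⟨0, by omega⟩ < u m ⟨p - 1, by omega⟩ ∧
      u (m + 2) ⟨p - 1, by omega⟩ / u (m + 2) ⟨0, by omega⟩ - 1
        < (1 / 2) * (u m ⟨p - 1, by omega⟩ / u m ⟨0, by omega⟩ - 1) := by
  have hz : (0 : ℕ) < p := by omega
  set z : Fin p := ⟨0, by omega⟩ with hzdef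
  set l : Fin p := ⟨p - 1, by omega⟩ with hldef
  have hzl : z ≠ l := by
    simp only [hzdef, hldef, ne_eq, Fin.mk.injEq]
    omega
  -- factorization of products
  have hfact : ∀ (n : ℕ) (j k : Fin p), j ≠ k →
      ∏ i ∈ Finset.univ.erase k, u n i
        = u n j * ∏ i ∈ (Finset.univ.erase k).erase j, u n i := by
    intro n j k hjk
    exact (Finset.mul_prod_erase _ _
      (Finset.mem_erase.mpr ⟨hjk, Finset.mem_univ j⟩)).symm
  have hle_l : ∀ i : Fin p, i ≤ l := by
    intro i
    rw [Fin.le_def]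
    have := i.isLt
    simp only [hldef]
    omega
  have hz_le : ∀ i : Fin p, z ≤ i := by
    intro i
    rw [Fin.le_def]
    simp [hzdef]
  -- main invariant
  have key : ∀ m, (∀ k, u m k ∈ Set.Ioo (0:ℝ) 1) ∧ Monotone (u m) ∧ u m z < u m l := by
    intro m
    induction m with
    | zero => exact ⟨h0, hmono, hirr⟩
    | succ n ih =>
      obtain ⟨hIoo, hmon, hlt⟩ := ih
      have hIoo' : ∀ k, u (n+1) k ∈ Set.Ioo (0:ℝ) 1 := by
        intro k
        rw [hrec n k]
        have hPpos : 0 < ∏ i ∈ Finset.univ.erase k, u n i :=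
          Finset.prod_pos fun i _ => (hIoo i).1
        have hj : ∃ j : Fin p, j ≠ k := by
          by_cases hk : k = z
          · exact ⟨l, by rw [hk]; exact hzl.symm⟩
          · exact ⟨z, Ne.symm hk⟩
        obtain ⟨j, hjk⟩ := hj
        have hP1 : ∏ i ∈ Finset.univ.erase k, u n i < 1 := by
          rw [hfact n j k hjk]
          have hR : ∏ i ∈ (Finset.univ.erase k).erase j, u n i ≤ 1 :=
            Finset.prod_le_one (fun i _ => (hIoo i).1.le) (fun i _ => (hIoo i).2.le)
          calc u n j * ∏ i ∈ (Finset.univ.erase k).erase j, u n i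
              ≤ u n j * 1 := by
                exact mul_le_mul_of_nonneg_left hR (hIoo j).1.le
            _ < 1 := by rw [mul_one]; exact (hIoo j).2
        constructor <;> [linarith; linarith]
      refine ⟨hIoo', ?_, ?_⟩
      · intro j k hjk
        rcases eq_or_lt_of_le hjk with rfl | hjk'
        · exact le_refl _
        · have hne : j ≠ k := ne_of_lt hjk'
          rw [hrec n j, hrec n k]
          have h1 : ∏ i ∈ Finset.univ.erase k, u n i
              = u n j * ∏ i ∈ (Finset.univ.erase k).erase j, u n i :=
            hfact n j k hne
          have h2 : ∏ i ∈ Finset.univ.erase j, u n i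
              = u n k * ∏ i ∈ (Finset.univ.erase k).erase j, u n i := by
            rw [hfact n k j hne.symm, Finset.erase_right_comm]
          have hQnn : 0 ≤ ∏ i ∈ (Finset.univ.erase k).erase j, u n i :=
            Finset.prod_nonneg fun i _ => (hIoo i).1.le
          have := mul_le_mul_of_nonneg_right (hmon hjk) hQnn
          rw [h1, h2]
          linarith
      · rw [hrec n z, hrec n l]
        have h1 : ∏ i ∈ Finset.univ.erase z, u n i
            = u n l * ∏ i ∈ (Finset.univ.erase z).erase l, u n i :=
          hfact n l z hzl.symm
        have h2 : ∏ i ∈ Finset.univ.erase l, u n i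
            = u n z * ∏ i ∈ (Finset.univ.erase z).erase l, u n i := by
          rw [hfact n z l hzl, Finset.erase_right_comm]
        have hQpos : 0 < ∏ i ∈ (Finset.univ.erase z).erase l, u n i :=
          Finset.prod_pos fun i _ => (hIoo i).1
        have := hlt
        rw [h1, h2]
        nlinarith
  intro m
  refine ⟨(key m).2.2, ?_⟩
  obtain ⟨hIoo, hmon, hlt⟩ := key m
  obtain ⟨hIoo1, hmon1, hlt1⟩ := key (m+1)
  obtain ⟨hIoo2, hmon2, hlt2⟩ := key (m+2)
  set Q : ℝ := ∏ i ∈ (Finset.univ.erase z).erase l, u m i with hQdef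
  set Q' : ℝ := ∏ i ∈ (Finset.univ.erase z).erase l, u (m+1) i with hQ'def
  have e1 : u (m+1) z = 1 - u m l * Q := by
    rw [hrec m z, hfact m l z hzl.symm]
  have e2 : u (m+1) l = 1 - u m z * Q := by
    rw [hrec m l, hfact m z l hzl, Finset.erase_right_comm]
  have e3 : u (m+2) z = 1 - u (m+1) l * Q' := by
    rw [show m + 2 = (m+1) + 1 from rfl, hrec (m+1) z, hfact (m+1) l z hzl.symm]
  have e4 : u (m+2) l = 1 - u (m+1) z * Q' := by
    rw [show m + 2 = (m+1) + 1 from rfl, hrec (m+1) l, hfact (m+1) z l hzl,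
      Finset.erase_right_comm]
  have hQpos : 0 < Q := Finset.prod_pos fun i _ => (hIoo i).1
  have hQ'pos : 0 < Q' := Finset.prod_pos fun i _ => (hIoo1 i).1
  -- cardinality of the middle set
  have hcard : ((Finset.univ.erase z).erase l).card = p - 2 := by
    rw [Finset.card_erase_of_mem (Finset.mem_erase.mpr ⟨hzl.symm, Finset.mem_univ l⟩),
      Finset.card_erase_of_mem (Finset.mem_univ z), Finset.card_univ, Fintype.card_fin]
    omega
  have hbl1 : u (m+1) l ∈ Set.Ioo (0:ℝ) 1 := hIoo1 l
  have hQ'le : Q' ≤ (u (m+1) l) ^ 2 := by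
    have h1 : Q' ≤ (u (m+1) l) ^ ((Finset.univ.erase z).erase l).card := by
      rw [hQ'def, ← Finset.prod_const]
      exact Finset.prod_le_prod (fun i _ => (hIoo1 i).1.le)
        (fun i _ => hmon1 (hle_l i))
    refine h1.trans ?_
    rw [hcard]
    exact pow_le_pow_of_le_one hbl1.1.le hbl1.2.le (by omega)
  set a : ℝ := u m z with hadef
  set b : ℝ := u m l with hbdef
  have ha : 0 < a := (hIoo z).1
  have hb : b < 1 := (hIoo l).2
  have hab : a < b := hlt
  -- y = a * Q ∈ (0,1)
  have hy1 : a * Q < 1 := by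
    have := (hIoo1 l).1
    rw [e2] at this
    linarith
  have hy0 : 0 < a * Q := mul_pos ha hQpos
  have hkey : Q' * (1 + a * Q) < 1 := by
    have hb' : u (m+1) l = 1 - a * Q := e2
    nlinarith [hQ'le, hy0, hy1, hQ'pos, sq_nonneg (a*Q)]
  have ha'' : 0 < u (m+2) z := (hIoo2 z).1
  have goal2 : 2 * a * (Q * Q') < u (m+2) z := by
    rw [e3, e2]
    nlinarith [hkey]
  have hdiff : u (m+2) l - u (m+2) z = Q * Q' * (b - a) := by
    rw [e3, e4, e1, e2]
    ring
  rw [div_sub_one ha''.ne', hdiff,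
    show (1:ℝ)/2 * (b/a - 1) = (b - a)/(2*a) by field_simp,
    div_lt_div_iff₀ ha'' (by linarith : (0:ℝ) < 2*a)]
  have hba : 0 < b - a := by linarith
  nlinarith [mul_lt_mul_of_pos_left goal2 hba]
end

section
/- (Lemma (d).) Let p ≥ 3 be an integer and let u^{(0)} ∈ (0,1)^p. Then for every pair of indices (k,l) ∈ {1,…,p}², the sequence m ↦ u_l^{(m)} / u_k^{(m)} converges to 1 as m → +∞; moreover the convergence is exponential, i.e. there exist C ≥ 0 and r ∈ (0,1) such that | u_l^{(m)} / u_k^{(m)} - 1 | ≤ C·r^m for all m ∈ ℕ. -/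
open Finset Filter

private lemma prod_mem_le {p : ℕ} (v : Fin p → ℝ) (hv : ∀ i, v i ∈ Set.Ioo (0:ℝ) 1)
    (s : Finset (Fin p)) {j : Fin p} (hj : j ∈ s) : ∏ i ∈ s, v i ≤ v j := by
  rw [← Finset.mul_prod_erase _ _ hj]
  exact mul_le_of_le_one_right (hv j).1.le
    (Finset.prod_le_one (fun i _ => (hv i).1.le) (fun i _ => (hv i).2.le))

private lemma scalar_key {M b q : ℝ} (hM : 1 ≤ M) (hb : b ≤ 1) (hq0 : 0 ≤ q) (hq1 : q ≤ 1)
    (hbq : 1 - b ≤ M * (1 - q)) :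
    q * (1 - b) ≤ 2 * M ^ 2 / (2 * M ^ 2 + 1) * (1 - b * q) := by
  have h2M : (0:ℝ) < 2 * M ^ 2 + 1 := by nlinarith
  rw [div_mul_eq_mul_div, le_div_iff₀ h2M]
  nlinarith [mul_le_mul_of_nonneg_left hbq hq0,
    mul_nonneg (mul_nonneg (by linarith : (0:ℝ) ≤ M) (by linarith : (0:ℝ) ≤ 2*M-1))
      (by linarith : (0:ℝ) ≤ 1 - q),
    mul_nonneg (by linarith : (0:ℝ) ≤ M) (sq_nonneg (1-q))]

theorem lemma_d (p : ℕ) (hp : 3 ≤ p) (u : ℕ → Fin p → ℝ)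
    (hrec : ∀ m : ℕ, ∀ k : Fin p,
      u (m + 1) k = 1 - ∏ i ∈ Finset.univ.erase k, u m i)
    (h0 : ∀ k : Fin p, u 0 k ∈ Set.Ioo (0 : ℝ) 1) :
    ∀ k l : Fin p,
      Filter.Tendsto (fun m : ℕ => u m l / u m k) Filter.atTop (nhds 1) ∧
      ∃ C : ℝ, 0 ≤ C ∧ ∃ r : ℝ, r ∈ Set.Ioo (0 : ℝ) 1 ∧
        ∀ m : ℕ, |u m l / u m k - 1| ≤ C * r ^ m := by
  have hp0 : 0 < p := by omega
  haveI : Nonempty (Fin p) := ⟨⟨0, hp0⟩⟩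
  -- all coordinates stay in (0,1)
  have hIoo : ∀ m i, u m i ∈ Set.Ioo (0:ℝ) 1 := by
    intro m
    induction m with
    | zero => exact h0
    | succ m ih =>
      intro i
      have hne : (univ.erase i).Nonempty := by
        rw [← Finset.card_pos, Finset.card_erase_of_mem (mem_univ i), card_univ,
          Fintype.card_fin]
        omega
      obtain ⟨j, hj⟩ := hne
      have hpos : 0 < ∏ t ∈ univ.erase i, u m t := Finset.prod_pos (fun t _ => (ih t).1)
      have hle : ∏ t ∈ univ.erase i, u m t ≤ u m j := prod_mem_le (u m) ih _ hj
      rw [Set.mem_Ioo, hrec m i]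
      exact ⟨by linarith [(ih j).2], by linarith⟩
  -- the comparability constant M
  have hune : (univ : Finset (Fin p × Fin p)).Nonempty := univ_nonempty
  set g : Fin p × Fin p → ℝ := fun q =>
    max (u 0 q.1 / u 0 q.2) ((1 - u 0 q.1) / (1 - u 0 q.2)) with hg
  set M : ℝ := univ.sup' hune g with hMdef
  have hM1 : 1 ≤ M := by
    obtain ⟨z⟩ := (inferInstance : Nonempty (Fin p))
    have h := Finset.le_sup' g (mem_univ (z, z))
    rw [← hMdef] at h
    have h1 : g (z, z) = max 1 ((1 - u 0 z) / (1 - u 0 z)) := by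
      rw [hg]; simp only []
      rw [div_self (ne_of_gt (h0 z).1)]
    have : (1:ℝ) ≤ g (z, z) := by rw [h1]; exact le_max_left _ _
    linarith
  have hM0 : (0:ℝ) ≤ M := by linarith
  -- comparability at all times
  have hcomp : ∀ m, ∀ i j : Fin p, u m i ≤ M * u m j ∧ 1 - u m i ≤ M * (1 - u m j) := by
    intro m
    induction m with
    | zero =>
      intro i j
      have h := Finset.le_sup' g (mem_univ (i, j))
      rw [← hMdef] at h
      constructor
      · have h1 : u 0 i / u 0 j ≤ M := le_trans (le_max_left _ _) h
        rwa [div_le_iff₀ (h0 j).1] at h1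
      · have h1 : (1 - u 0 i) / (1 - u 0 j) ≤ M := le_trans (le_max_right _ _) h
        rwa [div_le_iff₀ (by linarith [(h0 j).2] : (0:ℝ) < 1 - u 0 j)] at h1
    | succ m ih =>
      have hT : ∀ i : Fin p, u m i * ∏ t ∈ univ.erase i, u m t = ∏ t, u m t :=
        fun i => Finset.mul_prod_erase univ (u m) (mem_univ i)
      have hTpos : 0 < ∏ t, u m t := Finset.prod_pos (fun t _ => (hIoo m t).1)
      intro i j
      have hPipos : 0 < ∏ t ∈ univ.erase i, u m t :=
        Finset.prod_pos (fun t _ => (hIoo m t).1)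
      have hPjpos : 0 < ∏ t ∈ univ.erase j, u m t :=
        Finset.prod_pos (fun t _ => (hIoo m t).1)
      have hi := hIoo m i
      have hj := hIoo m j
      have hj' := hIoo (m+1) j
      have hui' : u (m+1) i = 1 - ∏ t ∈ univ.erase i, u m t := hrec m i
      have huj' : u (m+1) j = 1 - ∏ t ∈ univ.erase j, u m t := hrec m j
      constructor
      · rcases le_or_gt (u m i) (u m j) with hle | hlt
        · have hPle : ∏ t ∈ univ.erase j, u m t ≤ ∏ t ∈ univ.erase i, u m t := by
            refine le_of_mul_le_mul_right ?_ hj.1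
            calc (∏ t ∈ univ.erase j, u m t) * u m j = ∏ t, u m t := by
                  linear_combination hT j
              _ = (∏ t ∈ univ.erase i, u m t) * u m i := by linear_combination -hT i
              _ ≤ (∏ t ∈ univ.erase i, u m t) * u m j :=
                  mul_le_mul_of_nonneg_left hle hPipos.le
          have hmon : u (m+1) i ≤ u (m+1) j := by rw [hui', huj']; linarith
          calc u (m+1) i ≤ u (m+1) j := hmon
            _ ≤ M * u (m+1) j := le_mul_of_one_le_left hj'.1.le hM1
        · -- u m j < u m i : use the f-inequality
          have hji : j ≠ i := by rintro rfl; exact lt_irrefl _ hlt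
          have hjmem : j ∈ univ.erase i := mem_erase.2 ⟨hji, mem_univ j⟩
          have hPile : ∏ t ∈ univ.erase i, u m t ≤ u m j :=
            prod_mem_le (u m) (hIoo m) _ hjmem
          have hTle : ∏ t, u m t ≤ u m i * u m j := by
            calc ∏ t, u m t = u m i * ∏ t ∈ univ.erase i, u m t := (hT i).symm
              _ ≤ u m i * u m j := mul_le_mul_of_nonneg_left hPile hi.1.le
          have h4 : ((1 - ∏ t ∈ univ.erase j, u m t) * (1 - u m j)
              - (1 - ∏ t ∈ univ.erase i, u m t) * (1 - u m i)) * (u m i * u m j)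
              = (u m i - u m j) * (u m i * u m j - ∏ t, u m t) := by
            linear_combination (u m j - u m i * u m j) * hT i + (u m i * u m j - u m i) * hT j
          have h5 : 0 ≤ (u m i - u m j) * (u m i * u m j - ∏ t, u m t) :=
            mul_nonneg (by linarith) (by linarith)
          have hf : (1 - ∏ t ∈ univ.erase i, u m t) * (1 - u m i)
              ≤ (1 - ∏ t ∈ univ.erase j, u m t) * (1 - u m j) := by
            nlinarith [mul_pos hi.1 hj.1]
          -- combine with induction hypothesis
          have hIH : 1 - u m j ≤ M * (1 - u m i) := (ih j i).2
          have h1ui : (0:ℝ) < 1 - u m i := by linarith [hi.2]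
          refine le_of_mul_le_mul_right ?_ h1ui
          calc u (m+1) i * (1 - u m i)
              = (1 - ∏ t ∈ univ.erase i, u m t) * (1 - u m i) := by rw [hui']
            _ ≤ (1 - ∏ t ∈ univ.erase j, u m t) * (1 - u m j) := hf
            _ = u (m+1) j * (1 - u m j) := by rw [huj']
            _ ≤ u (m+1) j * (M * (1 - u m i)) :=
                mul_le_mul_of_nonneg_left hIH hj'.1.le
            _ = M * u (m+1) j * (1 - u m i) := by ring
      · -- second component
        rw [hui', huj']
        have hgoal : (∏ t ∈ univ.erase i, u m t) ≤ M * ∏ t ∈ univ.erase j, u m t := by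
          refine le_of_mul_le_mul_right ?_ (mul_pos hi.1 hj.1)
          calc (∏ t ∈ univ.erase i, u m t) * (u m i * u m j)
              = (∏ t, u m t) * u m j := by linear_combination (u m j) * hT i
            _ ≤ (∏ t, u m t) * (M * u m i) :=
                mul_le_mul_of_nonneg_left (ih j i).1 hTpos.le
            _ = (M * ∏ t ∈ univ.erase j, u m t) * (u m i * u m j) := by
                linear_combination (-(M * u m i)) * hT j
        linarith
  -- now the pairwise statement
  intro k l
  by_cases hkl : k = l
  · subst hkl
    have hone : ∀ m, u m k / u m k = 1 := fun m => div_self (ne_of_gt (hIoo m k).1)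
    constructor
    · have heq : (fun m : ℕ => u m k / u m k) = fun _ => (1:ℝ) := funext fun m => hone m
      rw [heq]; exact tendsto_const_nhds
    · exact ⟨0, le_refl 0, 1/2, ⟨by norm_num, by norm_num⟩,
        fun m => by rw [hone m]; simp⟩
  · -- main case k ≠ l
    have hlk : l ∈ univ.erase k := mem_erase.2 ⟨fun h => hkl h.symm, mem_univ l⟩
    have hkel : k ∈ univ.erase l := mem_erase.2 ⟨hkl, mem_univ k⟩
    set S : Finset (Fin p) := (univ.erase k).erase l with hS
    have hSeq : (univ.erase l).erase k = S := by
      rw [hS]; ext t; simp only [mem_erase, mem_univ, and_true]; tauto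
    have hPk : ∀ m, ∏ t ∈ univ.erase k, u m t = u m l * ∏ t ∈ S, u m t :=
      fun m => (Finset.mul_prod_erase _ _ hlk).symm
    have hPl : ∀ m, ∏ t ∈ univ.erase l, u m t = u m k * ∏ t ∈ S, u m t := by
      intro m
      rw [← Finset.mul_prod_erase _ (u m) hkel, hSeq]
    set Q : ℕ → ℝ := fun m => ∏ t ∈ S, u m t with hQ
    set D : ℕ → ℝ := fun m => |u m l - u m k| with hDdef
    set a : ℕ → ℝ := fun m => min (u m k) (u m l) with ha
    set b : ℕ → ℝ := fun m => max (u m k) (u m l) with hb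
    have hQpos : ∀ m, 0 < Q m := fun m => Finset.prod_pos (fun t _ => (hIoo m t).1)
    have hQ1 : ∀ m, Q m ≤ 1 :=
      fun m => Finset.prod_le_one (fun t _ => (hIoo m t).1.le) (fun t _ => (hIoo m t).2.le)
    have hSne : S.Nonempty := by
      rw [← Finset.card_pos, hS, Finset.card_erase_of_mem hlk,
        Finset.card_erase_of_mem (mem_univ k), card_univ, Fintype.card_fin]
      omega
    obtain ⟨s, hsS⟩ := hSne
    have hQs : ∀ m, Q m ≤ u m s := fun m => prod_mem_le (u m) (hIoo m) _ hsS
    have hapos : ∀ m, 0 < a m := fun m => lt_min (hIoo m k).1 (hIoo m l).1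
    have hb1 : ∀ m, b m < 1 := fun m => max_lt (hIoo m k).2 (hIoo m l).2
    have hbQ : ∀ m, 1 - b m ≤ M * (1 - Q m) := by
      intro m
      have h1 : 1 - b m ≤ 1 - u m k := by
        have hkb : u m k ≤ b m := le_max_left _ _
        linarith
      have h2 : 1 - u m k ≤ M * (1 - u m s) := (hcomp m k s).2
      have h3 : M * (1 - u m s) ≤ M * (1 - Q m) :=
        mul_le_mul_of_nonneg_left (by linarith [hQs m]) hM0
      linarith
    -- key identities
    have hD : ∀ m, u (m+1) l - u (m+1) k = Q m * (u m l - u m k) := by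
      intro m
      rw [hrec m l, hrec m k, hPk m, hPl m]
      ring
    have hDabs : ∀ m, D (m+1) = Q m * D m := by
      intro m
      show |u (m+1) l - u (m+1) k| = Q m * |u m l - u m k|
      rw [hD m, abs_mul, abs_of_pos (hQpos m)]
    have huk' : ∀ m, u (m+1) k = 1 - u m l * Q m := by
      intro m; rw [hrec m k, hPk m]
    have hul' : ∀ m, u (m+1) l = 1 - u m k * Q m := by
      intro m; rw [hrec m l, hPl m]
    have hb' : ∀ m, 1 - b (m+1) = Q m * a m := by
      intro m
      have hk' := huk' m
      have hl' := hul' m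
      rcases le_total (u m k) (u m l) with h | h
      · have h1 : u m k * Q m ≤ u m l * Q m :=
          mul_le_mul_of_nonneg_right h (hQpos m).le
        have hmax : b (m+1) = u (m+1) l := max_eq_right (by rw [hk', hl']; linarith)
        have hmin : a m = u m k := min_eq_left h
        rw [hmax, hl', hmin]; ring
      · have h1 : u m l * Q m ≤ u m k * Q m :=
          mul_le_mul_of_nonneg_right h (hQpos m).le
        have hmax : b (m+1) = u (m+1) k := max_eq_left (by rw [hk', hl']; linarith)
        have hmin : a m = u m l := min_eq_right h
        rw [hmax, hk', hmin]; ring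
    have ha' : ∀ m, a (m+1) = 1 - Q m * b m := by
      intro m
      have hk' := huk' m
      have hl' := hul' m
      rcases le_total (u m k) (u m l) with h | h
      · have h1 : u m k * Q m ≤ u m l * Q m :=
          mul_le_mul_of_nonneg_right h (hQpos m).le
        have hmin : a (m+1) = u (m+1) k := min_eq_left (by rw [hk', hl']; linarith)
        have hmax : b m = u m l := max_eq_right h
        rw [hmin, hk', hmax]; ring
      · have h1 : u m l * Q m ≤ u m k * Q m :=
          mul_le_mul_of_nonneg_right h (hQpos m).le
        have hmin : a (m+1) = u (m+1) l := min_eq_right (by rw [hk', hl']; linarith)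
        have hmax : b m = u m k := max_eq_left h
        rw [hmin, hl', hmax]; ring
    -- contraction
    set r : ℝ := 2 * M ^ 2 / (2 * M ^ 2 + 1) with hr
    have h2M : (0:ℝ) < 2 * M ^ 2 + 1 := by nlinarith
    have hrpos : 0 < r := by
      rw [hr]; exact div_pos (by nlinarith) h2M
    have hr1 : r < 1 := by
      rw [hr, div_lt_one h2M]; linarith
    set x : ℕ → ℝ := fun m => D m / a m with hx
    have hD0 : ∀ m, 0 ≤ D m := fun m => abs_nonneg _
    have hxnn : ∀ m, 0 ≤ x m := fun m => div_nonneg (hD0 m) (hapos m).le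
    have hxstep : ∀ m, x (m+2) ≤ r * x m := by
      intro m
      have h1 : a (m+2) = 1 - Q (m+1) * b (m+1) := ha' (m+1)
      have h2 : D (m+2) = Q (m+1) * (Q m * D m) := by rw [hDabs (m+1), hDabs m]
      have ha2 : 0 < a (m+2) := hapos (m+2)
      have ham : 0 < a m := hapos m
      have key : Q (m+1) * (1 - b (m+1)) ≤ r * (1 - b (m+1) * Q (m+1)) := by
        rw [hr]
        exact scalar_key hM1 (hb1 (m+1)).le (hQpos (m+1)).le (hQ1 (m+1)) (hbQ (m+1))
      show D (m+2) / a (m+2) ≤ r * (D m / a m)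
      rw [← mul_div_assoc, div_le_div_iff₀ ha2 ham]
      calc D (m+2) * a m = (Q (m+1) * (1 - b (m+1))) * D m := by
            rw [h2, hb' m]; ring
        _ ≤ (r * (1 - b (m+1) * Q (m+1))) * D m :=
            mul_le_mul_of_nonneg_right key (hD0 m)
        _ = r * D m * a (m+2) := by rw [h1]; ring
    -- geometric bound
    set sq : ℝ := Real.sqrt r with hsq
    have hsqpos : 0 < sq := Real.sqrt_pos.2 hrpos
    have hsq2 : sq ^ 2 = r := Real.sq_sqrt hrpos.le
    have hsq1 : sq < 1 := by nlinarith
    set C0 : ℝ := max (x 0) (x 1 / sq) with hC0def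
    have hC0 : 0 ≤ C0 := le_trans (hxnn 0) (le_max_left _ _)
    have hxbound : ∀ m, x m ≤ C0 * sq ^ m := by
      intro m
      induction m using Nat.strong_induction_on with
      | _ m ih =>
        match m with
        | 0 =>
          rw [pow_zero, mul_one]
          exact le_max_left _ _
        | 1 =>
          have h := le_max_right (x 0) (x 1 / sq)
          have heq : x 1 = (x 1 / sq) * sq := by field_simp
          rw [heq, pow_one]
          exact mul_le_mul_of_nonneg_right h hsqpos.le
        | (n+2) =>
          have ihn := ih n (by omega)
          calc x (n+2) ≤ r * x n := hxstep n
            _ ≤ r * (C0 * sq ^ n) := mul_le_mul_of_nonneg_left ihn hrpos.le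
            _ = C0 * sq ^ (n+2) := by rw [← hsq2]; ring
    have hbound : ∀ m, |u m l / u m k - 1| ≤ C0 * sq ^ m := by
      intro m
      have hk := hIoo m k
      have heq : u m l / u m k - 1 = (u m l - u m k) / u m k := by
        rw [sub_div, div_self (ne_of_gt hk.1)]
      rw [heq, abs_div, abs_of_pos hk.1]
      have hak : a m ≤ u m k := min_le_left _ _
      calc |u m l - u m k| / u m k ≤ |u m l - u m k| / a m := by
            gcongr
            exact hapos m
        _ ≤ C0 * sq ^ m := hxbound m
    constructor
    · have htends : Tendsto (fun m : ℕ => C0 * sq ^ m) atTop (nhds 0) := by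
        have h := tendsto_pow_atTop_nhds_zero_of_lt_one hsqpos.le hsq1
        simpa using h.const_mul C0
      have h1 : Tendsto (fun m : ℕ => u m l / u m k - 1) atTop (nhds 0) :=
        squeeze_zero_norm (fun m => by simpa [Real.norm_eq_abs] using hbound m) htends
      have h2 := h1.add_const 1
      simpa using h2
    · exact ⟨C0, hC0, sq, ⟨hsqpos, hsq1⟩, hbound⟩
end

section
/- Let p ≥ 3 be an integer and t ∈ (0,1)^p. Then for every pair of indices (k,l) ∈ {1,…,p}², the sequence m ↦ t_l^{(m)} / t_k^{(m)} converges to 1 as m → +∞, with exponential convergence: there exist C ≥ 0 and r ∈ (0,1) such that | t_l^{(m)} / t_k^{(m)} - 1 | ≤ C·r^m for all m ∈ ℕ. -/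
open Finset Filter

theorem t_ratio_tendsto_one (p : ℕ) (hp : 3 ≤ p) (t : ℕ → Fin p → ℝ)
    (hrec : ∀ m : ℕ, ∀ k : Fin p,
      t (m + 1) k = ∏ i ∈ Finset.univ.erase k, (1 - t m i))
    (h0 : ∀ k : Fin p, t 0 k ∈ Set.Ioo (0 : ℝ) 1) :
    ∀ k l : Fin p,
      Filter.Tendsto (fun m : ℕ => t m l / t m k) Filter.atTop (nhds 1) ∧
      ∃ C : ℝ, 0 ≤ C ∧ ∃ r : ℝ, r ∈ Set.Ioo (0 : ℝ) 1 ∧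
        ∀ m : ℕ, |t m l / t m k - 1| ≤ C * r ^ m := by
  have hp0 : 0 < p := by omega
  haveI : NeZero p := ⟨hp0.ne'⟩
  have hne : (Finset.univ : Finset (Fin p)).Nonempty := Finset.univ_nonempty
  -- all iterates stay in (0,1)
  have hmem : ∀ m k, t m k ∈ Set.Ioo (0:ℝ) 1 := by
    intro m
    induction m with
    | zero => exact h0
    | succ n ih =>
      intro k
      rw [hrec n k]
      have hpos : ∀ i ∈ Finset.univ.erase k, (0:ℝ) < 1 - t n i := by
        intro i _; linarith [(ih i).2]
      constructor
      · exact Finset.prod_pos hpos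
      · obtain ⟨j, hj⟩ : (Finset.univ.erase k).Nonempty := by
          rw [← Finset.card_pos, Finset.card_erase_of_mem (Finset.mem_univ k),
            Finset.card_univ, Fintype.card_fin]
          omega
        calc ∏ i ∈ Finset.univ.erase k, (1 - t n i)
            = (1 - t n j) * ∏ i ∈ (Finset.univ.erase k).erase j, (1 - t n i) :=
              (Finset.mul_prod_erase _ (fun i => 1 - t n i) hj).symm
          _ ≤ (1 - t n j) * 1 := by
              apply mul_le_mul_of_nonneg_left _ (by linarith [(ih j).2])
              apply Finset.prod_le_one
              · intro i _; linarith [(ih i).2]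
              · intro i _; linarith [(ih i).1]
          _ < 1 := by rw [mul_one]; linarith [(ih j).1]
  -- key product identity
  have hkey : ∀ m k, (1 - t m k) * t (m+1) k = ∏ i, (1 - t m i) := by
    intro m k
    rw [hrec m k]
    exact Finset.mul_prod_erase _ (fun i => 1 - t m i) (Finset.mem_univ k)
  set P : ℕ → ℝ := fun m => ∏ i, (1 - t m i) with hP
  have hPpos : ∀ m, 0 < P m :=
    fun m => Finset.prod_pos (fun i _ => by linarith [(hmem m i).2])
  have hform : ∀ m k, t (m+1) k = P m / (1 - t m k) := by
    intro m k
    have h1 : (0:ℝ) < 1 - t m k := by linarith [(hmem m k).2]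
    field_simp
    linarith [hkey m k]
  set M : ℕ → ℝ := fun m => Finset.univ.sup' hne (t m) with hM
  set μ : ℕ → ℝ := fun m => Finset.univ.inf' hne (t m) with hμ
  have hleM : ∀ m k, t m k ≤ M m := fun m k => Finset.le_sup' (t m) (Finset.mem_univ k)
  have hμle : ∀ m k, μ m ≤ t m k := fun m k => Finset.inf'_le (t m) (Finset.mem_univ k)
  have hMmem : ∀ m, ∃ a, M m = t m a := by
    intro m; obtain ⟨a, _, ha⟩ := Finset.exists_mem_eq_sup' hne (t m); exact ⟨a, ha⟩
  have hμmem : ∀ m, ∃ a, μ m = t m a := by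
    intro m; obtain ⟨a, _, ha⟩ := Finset.exists_mem_eq_inf' hne (t m); exact ⟨a, ha⟩
  have hμpos : ∀ m, 0 < μ m := by
    intro m; obtain ⟨a, ha⟩ := hμmem m; rw [ha]; exact (hmem m a).1
  have hMlt : ∀ m, M m < 1 := by
    intro m; obtain ⟨a, ha⟩ := hMmem m; rw [ha]; exact (hmem m a).2
  have hμM : ∀ m, μ m ≤ M m := by
    intro m; obtain ⟨a, ha⟩ := hMmem m; rw [ha]; exact hμle m a
  -- recurrences for M and μ
  have hMrec : ∀ m, M (m+1) = P m / (1 - M m) := by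
    intro m
    obtain ⟨a, ha⟩ := hMmem m
    apply le_antisymm
    · obtain ⟨b, hb⟩ := hMmem (m+1)
      rw [hb, hform m b]
      apply div_le_div_of_nonneg_left (hPpos m).le (by linarith [hMlt m])
      have := hleM m b; linarith
    · rw [ha, ← hform m a]; exact hleM (m+1) a
  have hμrec : ∀ m, μ (m+1) = P m / (1 - μ m) := by
    intro m
    obtain ⟨a, ha⟩ := hμmem m
    apply le_antisymm
    · rw [ha, ← hform m a]; exact hμle (m+1) a
    · obtain ⟨b, hb⟩ := hμmem (m+1)
      rw [hb, hform m b]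
      apply div_le_div_of_nonneg_left (hPpos m).le (by linarith [(hmem m b).2])
      have := hμle m b; linarith
  -- P m ≤ (1 - M m) * (1 - μ m)^2 whenever μ m < M m
  have hPbound : ∀ m, μ m < M m → P m ≤ (1 - M m) * ((1 - μ m) * (1 - μ m)) := by
    intro m hlt
    obtain ⟨a, ha⟩ := hMmem m
    obtain ⟨b, hb⟩ := hμmem m
    have hab : a ≠ b := by
      intro h; rw [ha, hb, h] at hlt; exact lt_irrefl _ hlt
    obtain ⟨c, hca, hcb⟩ : ∃ c : Fin p, c ≠ a ∧ c ≠ b := by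
      by_contra h
      push_neg at h
      have hsub : (Finset.univ : Finset (Fin p)) ⊆ {a, b} := by
        intro x _
        rcases eq_or_ne x a with h1 | h1
        · simp [h1]
        · simp [h x h1]
      have hcard := Finset.card_le_card hsub
      rw [Finset.card_univ, Fintype.card_fin, Finset.card_pair hab] at hcard
      omega
    have hbmem : b ∈ Finset.univ.erase a := by simp [hab.symm]
    have hcmem : c ∈ (Finset.univ.erase a).erase b := by simp [hca, hcb]
    have e1 : P m = (1 - t m a) * ((1 - t m b) * ((1 - t m c) *
        ∏ i ∈ ((Finset.univ.erase a).erase b).erase c, (1 - t m i))) := by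
      show (∏ i, (1 - t m i)) = _
      rw [← Finset.mul_prod_erase _ (fun i => 1 - t m i) (Finset.mem_univ a),
        ← Finset.mul_prod_erase _ (fun i => 1 - t m i) hbmem,
        ← Finset.mul_prod_erase _ (fun i => 1 - t m i) hcmem]
    have hrest : ∏ i ∈ ((Finset.univ.erase a).erase b).erase c, (1 - t m i) ≤ 1 := by
      apply Finset.prod_le_one
      · intro i _; linarith [(hmem m i).2]
      · intro i _; linarith [(hmem m i).1]
    have hrestpos : 0 < ∏ i ∈ ((Finset.univ.erase a).erase b).erase c, (1 - t m i) :=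
      Finset.prod_pos (fun i _ => by linarith [(hmem m i).2])
    have hc0 : 0 < 1 - t m c := by linarith [(hmem m c).2]
    have hb0 : 0 < 1 - t m b := by linarith [(hmem m b).2]
    have ha0 : 0 < 1 - t m a := by linarith [(hmem m a).2]
    have h2 : (1 - t m c) * ∏ i ∈ ((Finset.univ.erase a).erase b).erase c, (1 - t m i)
        ≤ 1 - μ m := by
      have hc1 : 1 - t m c ≤ 1 - μ m := by linarith [hμle m c]
      nlinarith
    rw [e1, ← ha, ← hb]
    have hMm0 : 0 < 1 - M m := by linarith [hMlt m]
    have hμm0 : 0 < 1 - μ m := by linarith [hμM m, hMlt m]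
    apply mul_le_mul_of_nonneg_left _ hMm0.le
    rw [hb]
    apply mul_le_mul_of_nonneg_left _ hb0.le
    rw [← hb]
    exact h2
  -- the contraction quantity
  set δ : ℕ → ℝ := fun m => (M m - μ m) / μ m with hδ
  have hδnonneg : ∀ m, 0 ≤ δ m := fun m => div_nonneg (by linarith [hμM m]) (hμpos m).le
  have hcontr : ∀ m, δ (m+2) ≤ δ m / 2 := by
    intro m
    have hA := hMlt m; have hB := hμpos m; have hBA := hμM m
    have hPp := hPpos m
    have h1A : (0:ℝ) < 1 - M m := by linarith
    have h1B : (0:ℝ) < 1 - μ m := by linarith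
    have hM1 : M (m+1) = P m / (1 - M m) := hMrec m
    have hμ1 : μ (m+1) = P m / (1 - μ m) := hμrec m
    have h1M1 : (0:ℝ) < 1 - M (m+1) := by linarith [hMlt (m+1)]
    have h1μ1 : (0:ℝ) < 1 - μ (m+1) := by linarith [hμM (m+1), hMlt (m+1)]
    have hPlt : P m < 1 - M m := by
      have := hMlt (m+1)
      rw [hM1, div_lt_one h1A] at this
      exact this
    have hkey2 : δ (m+2) = (M (m+1) - μ (m+1)) / (1 - M (m+1)) := by
      have e1 : δ (m+2) = (M (m+2) - μ (m+2)) / μ (m+2) := rfl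
      rw [e1, hMrec (m+1), hμrec (m+1)]
      have hP1 := hPpos (m+1)
      field_simp
      ring
    have hLHS : (M (m+1) - μ (m+1)) / (1 - M (m+1))
        = P m * (M m - μ m) / ((1 - μ m) * (1 - M m - P m)) := by
      rw [hM1, hμ1]
      have hd : (0:ℝ) < 1 - M m - P m := by linarith
      field_simp
      ring
    rw [hkey2, hLHS, hδ]
    show P m * (M m - μ m) / ((1 - μ m) * (1 - M m - P m)) ≤ (M m - μ m) / μ m / 2
    rw [div_div]
    rcases eq_or_lt_of_le hBA with heq | hlt
    · rw [← heq]
      simp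
    · have hPb := hPbound m hlt
      have hdenpos : (0:ℝ) < (1 - μ m) * (1 - M m - P m) := by
        apply mul_pos h1B; linarith
      rw [div_le_div_iff₀ hdenpos (by positivity)]
      have hPB : P m * (1 + μ m) ≤ (1 - M m) * (1 - μ m) := by
        nlinarith [mul_le_mul_of_nonneg_right hPb (by linarith : (0:ℝ) ≤ 1 + μ m)]
      nlinarith [mul_nonneg (by linarith : (0:ℝ) ≤ M m - μ m)
        (by linarith : (0:ℝ) ≤ (1 - M m) * (1 - μ m) - P m * (1 + μ m))]
  -- geometric bound on δ
  set C0 : ℝ := max (δ 0) ((4/3) * δ 1) with hC0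
  have hC0nn : 0 ≤ C0 := le_trans (hδnonneg 0) (le_max_left _ _)
  have hgeo : ∀ m, δ m ≤ C0 * (3/4)^m := by
    intro m
    induction m using Nat.strong_induction_on with
    | _ m ih =>
      match m with
      | 0 =>
        rw [pow_zero, mul_one, hC0]
        exact le_max_left _ _
      | 1 =>
        have h := le_max_right (δ 0) ((4/3) * δ 1)
        rw [← hC0] at h
        rw [pow_one]
        linarith
      | (n+2) =>
        have h1 := ih n (by omega)
        have h2 := hcontr n
        have h3 : (0:ℝ) ≤ C0 * (3/4:ℝ)^n := by positivity
        have h4 : (C0:ℝ) * (3/4)^(n+2) = (C0 * (3/4)^n) * (9/16) := by ring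
        rw [h4]
        linarith
  -- per-pair bound
  have hpair : ∀ (m : ℕ) (k l : Fin p), |t m l / t m k - 1| ≤ δ m := by
    intro m k l
    have hk := (hmem m k).1
    have e : t m l / t m k - 1 = (t m l - t m k) / t m k := by
      field_simp
    rw [e, abs_div, abs_of_pos hk]
    apply div_le_div₀ (by linarith [hμM m]) _ (hμpos m) (hμle m k)
    rw [abs_le]
    constructor
    · linarith [hμle m l, hleM m k]
    · linarith [hleM m l, hμle m k]
  intro k l
  have hfinal : ∀ m, |t m l / t m k - 1| ≤ C0 * (3/4)^m :=
    fun m => (hpair m k l).trans (hgeo m)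
  constructor
  · have hz : Tendsto (fun m : ℕ => C0 * (3/4:ℝ)^m) atTop (nhds 0) := by
      have := (tendsto_pow_atTop_nhds_zero_of_lt_one (by norm_num : (0:ℝ) ≤ 3/4)
        (by norm_num : (3/4:ℝ) < 1)).const_mul C0
      simpa using this
    have h0' : Tendsto (fun m : ℕ => t m l / t m k - 1) atTop (nhds 0) :=
      squeeze_zero_norm (fun m => hfinal m) hz
    have := h0'.add_const 1
    simpa using this
  · exact ⟨C0, hC0nn, 3/4, ⟨by norm_num, by norm_num⟩, hfinal⟩
end

section
/- (Theorem 2.) Let p ≥ 3 be an integer, let E be a real normed vector space, let A_1,…,A_p ∈ E, and let t ∈ (0,1)^p. For each m ∈ ℕ define the weights w_k^{(m)} = ∏_{i ≠ k} (1 - t_i^{(m)}) (which are positive) and the barycenter G_m = ( Σ_{k=1}^{p} w_k^{(m)} A_k ) / ( Σ_{k=1}^{p} w_k^{(m)} ). Then the sequence (G_m) converges to the centroid G = (1/p)·Σ_{k=1}^{p} A_k, and the convergence is exponential: there exist C ≥ 0 and r ∈ (0,1) such that ‖G_m - G‖ ≤ C·r^m for all m ∈ ℕ. -/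
private lemma bary_prod_split {p : ℕ} (f : Fin p → ℝ) {a b : Fin p} (hab : b ≠ a) :
    ∏ i ∈ Finset.univ.erase a, f i = f b * ∏ i ∈ (Finset.univ.erase a).erase b, f i :=
  (Finset.mul_prod_erase _ f (Finset.mem_erase.mpr ⟨hab, Finset.mem_univ b⟩)).symm

private lemma bary_mem_Ioo {p : ℕ} (hp : 3 ≤ p) (t : ℕ → Fin p → ℝ)
    (hrec : ∀ m k, t (m + 1) k = ∏ i ∈ Finset.univ.erase k, (1 - t m i))
    (h0 : ∀ k, t 0 k ∈ Set.Ioo (0:ℝ) 1) :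
    ∀ m k, t m k ∈ Set.Ioo (0:ℝ) 1 := by
  intro m
  induction m with
  | zero => exact h0
  | succ m ih =>
    intro k
    have hpos : ∀ i ∈ Finset.univ.erase k, 0 < 1 - t m i := fun i _ => by
      linarith [(ih i).2]
    have hne : (Finset.univ.erase k).Nonempty := by
      rw [← Finset.card_pos, Finset.card_erase_of_mem (Finset.mem_univ k), Finset.card_univ,
        Fintype.card_fin]
      omega
    obtain ⟨i0, hi0⟩ := hne
    constructor
    · rw [hrec]
      exact Finset.prod_pos hpos
    · rw [hrec, ← Finset.mul_prod_erase _ _ hi0]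
      have h2 : ∏ i ∈ (Finset.univ.erase k).erase i0, (1 - t m i) ≤ 1 :=
        Finset.prod_le_one
          (fun i hi => (hpos i (Finset.mem_of_mem_erase hi)).le)
          (fun i hi => by linarith [(ih i).1])
      calc (1 - t m i0) * ∏ i ∈ (Finset.univ.erase k).erase i0, (1 - t m i)
          ≤ 1 - t m i0 := mul_le_of_le_one_right (by linarith [(ih i0).2]) h2
        _ < 1 := by linarith [(ih i0).1]

private lemma bary_mono {p : ℕ} (t : ℕ → Fin p → ℝ)
    (hrec : ∀ m k, t (m + 1) k = ∏ i ∈ Finset.univ.erase k, (1 - t m i))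
    (ht : ∀ m k, t m k ∈ Set.Ioo (0:ℝ) 1)
    (m : ℕ) {a b : Fin p} (h : 1 - t m a ≤ 1 - t m b) :
    1 - t (m+1) a ≤ 1 - t (m+1) b := by
  rcases eq_or_ne a b with rfl | hab
  · exact le_refl _
  · have key : t (m+1) a - t (m+1) b
        = ((1 - t m b) - (1 - t m a)) * ∏ i ∈ (Finset.univ.erase a).erase b, (1 - t m i) := by
      rw [hrec, hrec, bary_prod_split (fun i => 1 - t m i) hab.symm,
        bary_prod_split (fun i => 1 - t m i) hab,
        Finset.erase_right_comm (a := b) (b := a)]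
      ring
    have hQ : 0 ≤ ∏ i ∈ (Finset.univ.erase a).erase b, (1 - t m i) :=
      Finset.prod_nonneg fun i _ => by linarith [(ht m i).2]
    nlinarith [mul_nonneg (by linarith : (0:ℝ) ≤ (1 - t m b) - (1 - t m a)) hQ]

theorem dual_sequence_tendsto_centroid (p : ℕ) (hp : 3 ≤ p)
    (E : Type*) [NormedAddCommGroup E] [NormedSpace ℝ E]
    (A : Fin p → E) (t : ℕ → Fin p → ℝ)
    (hrec : ∀ m : ℕ, ∀ k : Fin p,
      t (m + 1) k = ∏ i ∈ Finset.univ.erase k, (1 - t m i))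
    (h0 : ∀ k : Fin p, t 0 k ∈ Set.Ioo (0 : ℝ) 1)
    (w : ℕ → Fin p → ℝ)
    (hw : ∀ m : ℕ, ∀ k : Fin p, w m k = ∏ i ∈ Finset.univ.erase k, (1 - t m i))
    (G : ℕ → E)
    (hG : ∀ m : ℕ, G m = (∑ k : Fin p, w m k)⁻¹ • ∑ k : Fin p, w m k • A k)
    (Gc : E) (hGc : Gc = ((p : ℝ))⁻¹ • ∑ k : Fin p, A k) :
    Filter.Tendsto G Filter.atTop (nhds Gc) ∧
    ∃ C : ℝ, 0 ≤ C ∧ ∃ r : ℝ, r ∈ Set.Ioo (0 : ℝ) 1 ∧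
      ∀ m : ℕ, ‖G m - Gc‖ ≤ C * r ^ m := by
  have ht : ∀ m k, t m k ∈ Set.Ioo (0:ℝ) 1 := bary_mem_Ioo hp t hrec h0
  have huniv_ne : (Finset.univ : Finset (Fin p)).Nonempty := ⟨⟨0, by omega⟩, Finset.mem_univ _⟩
  obtain ⟨jm, -, hjm0⟩ := Finset.exists_min_image Finset.univ (fun k => 1 - t 0 k) huniv_ne
  have hne1 : (Finset.univ.erase jm).Nonempty := by
    rw [← Finset.card_pos, Finset.card_erase_of_mem (Finset.mem_univ jm), Finset.card_univ,
      Fintype.card_fin]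
    omega
  obtain ⟨jM, hjMmem, hjM0⟩ := Finset.exists_max_image (Finset.univ.erase jm)
    (fun k => 1 - t 0 k) hne1
  have hMm : jM ≠ jm := (Finset.mem_erase.mp hjMmem).1
  -- order invariance
  have hmono : ∀ m, (∀ k, 1 - t m jm ≤ 1 - t m k) ∧ (∀ k, 1 - t m k ≤ 1 - t m jM) := by
    intro m
    induction m with
    | zero =>
      refine ⟨fun k => hjm0 k (Finset.mem_univ k), fun k => ?_⟩
      rcases eq_or_ne k jm with rfl | hk
      · exact hjm0 jM (Finset.mem_univ jM)
      · exact hjM0 k (Finset.mem_erase.mpr ⟨hk, Finset.mem_univ k⟩)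
    | succ m ih =>
      exact ⟨fun k => bary_mono t hrec ht m (ih.1 k),
        fun k => bary_mono t hrec ht m (ih.2 k)⟩
  -- key identities
  have idA : ∀ m, t (m+1) jm
      = (1 - t m jM) * ∏ i ∈ (Finset.univ.erase jm).erase jM, (1 - t m i) := by
    intro m
    rw [hrec, bary_prod_split (fun i => 1 - t m i) hMm]
  have idB : ∀ m, t (m+1) jM
      = (1 - t m jm) * ∏ i ∈ (Finset.univ.erase jm).erase jM, (1 - t m i) := by
    intro m
    rw [hrec, bary_prod_split (fun i => 1 - t m i) (Ne.symm hMm),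
      Finset.erase_right_comm (a := jM) (b := jm)]
  have hSne : ((Finset.univ.erase jm).erase jM).Nonempty := by
    rw [← Finset.card_pos, Finset.card_erase_of_mem hjMmem,
      Finset.card_erase_of_mem (Finset.mem_univ jm), Finset.card_univ, Fintype.card_fin]
    omega
  have hQpos : ∀ m, 0 < ∏ i ∈ (Finset.univ.erase jm).erase jM, (1 - t m i) :=
    fun m => Finset.prod_pos fun i _ => by linarith [(ht m i).2]
  have hQle1 : ∀ m, ∏ i ∈ (Finset.univ.erase jm).erase jM, (1 - t m i) ≤ 1 :=
    fun m => Finset.prod_le_one (fun i _ => by linarith [(ht m i).2])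
      (fun i _ => by linarith [(ht m i).1])
  -- Q (m+1) ≤ 1 - t (m+1) jM
  have hQleM : ∀ m, ∏ i ∈ (Finset.univ.erase jm).erase jM, (1 - t (m+1) i)
      ≤ 1 - t (m+1) jM := by
    intro m
    obtain ⟨i0, hi0⟩ := hSne
    rw [← Finset.mul_prod_erase _ _ hi0]
    have h2 : ∏ i ∈ ((Finset.univ.erase jm).erase jM).erase i0, (1 - t (m+1) i) ≤ 1 :=
      Finset.prod_le_one (fun i _ => by linarith [(ht (m+1) i).2])
        (fun i _ => by linarith [(ht (m+1) i).1])
    calc (1 - t (m+1) i0) * ∏ i ∈ ((Finset.univ.erase jm).erase jM).erase i0, (1 - t (m+1) i)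
        ≤ 1 - t (m+1) i0 := mul_le_of_le_one_right (by linarith [(ht (m+1) i0).2]) h2
      _ ≤ 1 - t (m+1) jM := (hmono (m+1)).2 i0
  -- sigma and its recursion
  set σ : ℕ → ℝ := fun m => (t m jm - t m jM) / (1 - t m jm) with hσdef
  have hDnn : ∀ m, 0 ≤ t m jm - t m jM := fun m => by linarith [(hmono m).2 jm]
  have hσnn : ∀ m, 0 ≤ σ m := fun m =>
    div_nonneg (hDnn m) (by linarith [(ht m jm).2])
  have hstep : ∀ m, σ (m+2) ≤ σ m / 2 := by
    intro m
    have hA1 := idA (m+1)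
    have hB1 := idB (m+1)
    have hA := idA m
    have hB := idB m
    set Qm := ∏ i ∈ (Finset.univ.erase jm).erase jM, (1 - t m i) with hQm
    set Q1 := ∏ i ∈ (Finset.univ.erase jm).erase jM, (1 - t (m+1) i) with hQ1
    have hq : Q1 ≤ 1 - t (m+1) jM := hQleM m
    have hq0 : 0 < Q1 := hQpos (m+1)
    have hQm0 : 0 < Qm := hQpos m
    have hμ : 0 < 1 - t m jm := by linarith [(ht m jm).2]
    have hx1 : (1 - t m jm) * Qm < 1 := by rw [← hB]; exact (ht (m+1) jM).2
    have hμ2 : 0 < 1 - t (m+2) jm := by linarith [(ht (m+2) jm).2]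
    show (t (m+2) jm - t (m+2) jM) / (1 - t (m+2) jm)
        ≤ ((t m jm - t m jM) / (1 - t m jm)) / 2
    rw [div_div, div_le_div_iff₀ hμ2 (by linarith)]
    have hD2 : t (m+2) jm - t (m+2) jM = (t m jm - t m jM) * Qm * Q1 := by
      rw [hA1, hB1, hA, hB]; ring
    have hM1 : 1 - t (m+1) jM = 1 - (1 - t m jm) * Qm := by rw [hB]
    have hden : 1 - t (m+2) jm = 1 - (1 - (1 - t m jm) * Qm) * Q1 := by
      rw [hA1, hM1]
    rw [hD2, hden]
    have hq' : Q1 ≤ 1 - (1 - t m jm) * Qm := hM1 ▸ hq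
    have hxnn : (0:ℝ) ≤ (1 - t m jm) * Qm := by positivity
    have hkey : 2 * ((1 - t m jm) * Qm) * Q1 ≤ 1 - (1 - (1 - t m jm) * Qm) * Q1 := by
      nlinarith [mul_le_mul_of_nonneg_left hq' hxnn, sq_nonneg ((1 - t m jm) * Qm)]
    nlinarith [mul_le_mul_of_nonneg_left hkey (hDnn m)]
  -- geometric bound on sigma
  set C0 : ℝ := max (σ 0) (σ 1 * (4/3)) with hC0def
  have hC0nn : 0 ≤ C0 := le_trans (hσnn 0) (le_max_left _ _)
  have hσb : ∀ m, σ m ≤ C0 * (3/4)^m ∧ σ (m+1) ≤ C0 * (3/4)^(m+1) := by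
    intro m
    induction m with
    | zero =>
      constructor
      · rw [pow_zero, mul_one, hC0def]
        exact le_max_left _ _
      · have h := le_max_right (σ 0) (σ 1 * (4/3))
        rw [pow_one, hC0def]
        show σ 1 ≤ (σ 0 ⊔ σ 1 * (4/3)) * (3/4)
        rcases le_total (σ 0) (σ 1 * (4/3)) with hc | hc
        · rw [max_eq_right hc]; linarith
        · rw [max_eq_left hc]; linarith [hσnn 1, hσnn 0]
    | succ m ih =>
      refine ⟨ih.2, ?_⟩
      have h1 := hstep m
      have h2 := ih.1
      have h3 : (0:ℝ) ≤ (3/4:ℝ)^m := by positivity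
      have : C0 * (3/4:ℝ)^(m+2) = (9/16) * (C0 * (3/4)^m) := by ring
      rw [this]
      nlinarith [mul_nonneg hC0nn h3]
  -- bound on ‖G m - Gc‖
  have hGb : ∀ m, ‖G m - Gc‖ ≤ σ m * ∑ k, ‖A k‖ := by
    intro m
    have hwpos : ∀ k, 0 < w m k := fun k => by
      rw [hw]; exact Finset.prod_pos fun i _ => by linarith [(ht m i).2]
    have hWpos : 0 < ∑ k, w m k := Finset.sum_pos (fun k _ => hwpos k) huniv_ne
    have hp0 : (0:ℝ) < p := by exact_mod_cast (by omega : 0 < p)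
    have hμ : 0 < 1 - t m jm := by linarith [(ht m jm).2]
    have hprod : ∀ k, (1 - t m k) * w m k = ∏ i, (1 - t m i) := fun k => by
      rw [hw]
      exact Finset.mul_prod_erase Finset.univ (fun i => 1 - t m i) (Finset.mem_univ k)
    have hpair : ∀ j k : Fin p, (1 - t m jm) * w m k ≤ (1 - t m jM) * w m j := by
      intro j k
      calc (1 - t m jm) * w m k ≤ (1 - t m k) * w m k :=
            mul_le_mul_of_nonneg_right ((hmono m).1 k) (hwpos k).le
        _ = (1 - t m j) * w m j := (hprod k).trans (hprod j).symm
        _ ≤ (1 - t m jM) * w m j :=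
            mul_le_mul_of_nonneg_right ((hmono m).2 j) (hwpos j).le
    have hsum1 : ∀ k, (p:ℝ) * ((1 - t m jm) * w m k) ≤ (1 - t m jM) * ∑ j, w m j := by
      intro k
      have h := Finset.sum_le_sum (s := Finset.univ) (fun j _ => hpair j k)
      simpa [Finset.sum_const, Finset.card_univ, Finset.mul_sum, nsmul_eq_mul] using h
    have hsum2 : ∀ k, (1 - t m jm) * ∑ j, w m j ≤ (p:ℝ) * ((1 - t m jM) * w m k) := by
      intro k
      have h := Finset.sum_le_sum (s := Finset.univ) (fun j _ => hpair k j)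
      simpa [Finset.sum_const, Finset.card_univ, Finset.mul_sum, nsmul_eq_mul] using h
    have hck : ∀ k, |(∑ j, w m j)⁻¹ * w m k - (p:ℝ)⁻¹| ≤ σ m := by
      intro k
      have heq : (∑ j, w m j)⁻¹ * w m k - (p:ℝ)⁻¹
          = ((p:ℝ) * w m k - ∑ j, w m j) / ((p:ℝ) * ∑ j, w m j) := by
        field_simp
      have hpW : (0:ℝ) < (p:ℝ) * ∑ j, w m j := mul_pos hp0 hWpos
      rw [heq, hσdef]
      rw [abs_div, abs_of_pos hpW, div_le_div_iff₀ hpW hμ]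
      have hwle : w m k ≤ ∑ j, w m j :=
        Finset.single_le_sum (fun j _ => (hwpos j).le) (Finset.mem_univ k)
      have hD := hDnn m
      have hp3 : (3:ℝ) ≤ (p:ℝ) := by exact_mod_cast hp
      rcases abs_cases ((p:ℝ) * w m k - ∑ j, w m j) with h | h <;> rw [h.1]
      · nlinarith [hsum1 k,
          mul_nonneg (mul_nonneg hD hWpos.le) (by linarith : (0:ℝ) ≤ (p:ℝ) - 1)]
      · nlinarith [hsum2 k,
          mul_nonneg (mul_nonneg hp0.le hD) (by linarith : (0:ℝ) ≤ (∑ j, w m j) - w m k)]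
    have hGm : G m - Gc = ∑ k, ((∑ j, w m j)⁻¹ * w m k - (p:ℝ)⁻¹) • A k := by
      rw [hG, hGc, Finset.smul_sum, Finset.smul_sum, ← Finset.sum_sub_distrib]
      exact Finset.sum_congr rfl fun k _ => by rw [smul_smul, ← sub_smul]
    rw [hGm]
    calc ‖∑ k, ((∑ j, w m j)⁻¹ * w m k - (p:ℝ)⁻¹) • A k‖
        ≤ ∑ k, ‖((∑ j, w m j)⁻¹ * w m k - (p:ℝ)⁻¹) • A k‖ := norm_sum_le _ _
      _ = ∑ k, |(∑ j, w m j)⁻¹ * w m k - (p:ℝ)⁻¹| * ‖A k‖ := by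
          simp [norm_smul, Real.norm_eq_abs]
      _ ≤ ∑ k, σ m * ‖A k‖ := Finset.sum_le_sum fun k _ =>
          mul_le_mul_of_nonneg_right (hck k) (norm_nonneg _)
      _ = σ m * ∑ k, ‖A k‖ := by rw [Finset.mul_sum]
  -- assemble
  set SA : ℝ := ∑ k, ‖A k‖ with hSAdef
  have hSAnn : 0 ≤ SA := Finset.sum_nonneg fun k _ => norm_nonneg _
  have hfinal : ∀ m, ‖G m - Gc‖ ≤ (C0 * SA) * (3/4)^m := by
    intro m
    refine (hGb m).trans ?_
    have h1 := (hσb m).1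
    have h2 : σ m * SA ≤ (C0 * (3/4)^m) * SA :=
      mul_le_mul_of_nonneg_right h1 hSAnn
    calc σ m * SA ≤ (C0 * (3/4)^m) * SA := h2
      _ = (C0 * SA) * (3/4)^m := by ring
  constructor
  · rw [tendsto_iff_norm_sub_tendsto_zero]
    refine squeeze_zero (fun m => norm_nonneg _) hfinal ?_
    have h := (tendsto_pow_atTop_nhds_zero_of_lt_one
      (by norm_num : (0:ℝ) ≤ 3/4) (by norm_num : (3/4:ℝ) < 1)).const_mul (C0 * SA)
    simpa using h
  · exact ⟨C0 * SA, mul_nonneg hC0nn hSAnn, 3/4, ⟨by norm_num, by norm_num⟩, hfinal⟩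
end

section
/- Let p ≥ 3 be an integer and u ∈ (0,1)^p. If u_k < α_p for every k ∈ {1,…,p}, then α_p < F(u)_k < 1 for every k; and if α_p < u_k < 1 for every k ∈ {1,…,p}, then 0 < F(u)_k < α_p for every k. That is, F maps (0,α_p)^p into (α_p,1)^p and maps (α_p,1)^p into (0,α_p)^p. -/
theorem F_swaps_sides (p : ℕ) (hp : 3 ≤ p) (α : ℝ)
    (hα : α ∈ Set.Ioo (0 : ℝ) 1) (hroot : α ^ (p - 1) + α - 1 = 0)
    (u : Fin p → ℝ) (hu : ∀ k, u k ∈ Set.Ioo (0 : ℝ) 1)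
    (F : (Fin p → ℝ) → Fin p → ℝ)
    (hF : ∀ v : Fin p → ℝ, ∀ k : Fin p, F v k = 1 - ∏ i ∈ Finset.univ.erase k, v i) :
    ((∀ k : Fin p, u k < α) → ∀ k : Fin p, F u k ∈ Set.Ioo α 1) ∧
    ((∀ k : Fin p, α < u k) → ∀ k : Fin p, F u k ∈ Set.Ioo (0 : ℝ) α) := by
  obtain ⟨hα0, hα1⟩ := hα
  have hαp : α ^ (p - 1) = 1 - α := by linarith
  have hcard : ∀ k : Fin p, (Finset.univ.erase k).card = p - 1 := by
    intro k
    rw [Finset.card_erase_of_mem (Finset.mem_univ k), Finset.card_univ, Fintype.card_fin]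
  have hne : ∀ k : Fin p, (Finset.univ.erase k).Nonempty := by
    intro k
    rw [← Finset.card_pos, hcard]
    omega
  constructor
  · intro h k
    rw [hF]
    have hprod : ∏ i ∈ Finset.univ.erase k, u i < α ^ (p - 1) := by
      calc ∏ i ∈ Finset.univ.erase k, u i
          < ∏ _i ∈ Finset.univ.erase k, α := by
            apply Finset.prod_lt_prod_of_nonempty
            · intro i _; exact (hu i).1
            · intro i _; exact h i
            · exact hne k
        _ = α ^ (p - 1) := by rw [Finset.prod_const, hcard]
    have hpos : 0 < ∏ i ∈ Finset.univ.erase k, u i :=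
      Finset.prod_pos fun i _ => (hu i).1
    constructor <;> nlinarith
  · intro h k
    rw [hF]
    have hprod : α ^ (p - 1) < ∏ i ∈ Finset.univ.erase k, u i := by
      calc α ^ (p - 1) = ∏ _i ∈ Finset.univ.erase k, α := by
            rw [Finset.prod_const, hcard]
        _ < ∏ i ∈ Finset.univ.erase k, u i := by
            apply Finset.prod_lt_prod_of_nonempty
            · intro i _; exact hα0
            · intro i _; exact h i
            · exact hne k
    have hlt1 : ∏ i ∈ Finset.univ.erase k, u i < 1 := by
      calc ∏ i ∈ Finset.univ.erase k, u i
          < ∏ _i ∈ Finset.univ.erase k, (1:ℝ) := by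
            apply Finset.prod_lt_prod_of_nonempty
            · intro i _; exact (hu i).1
            · intro i _; exact (hu i).2
            · exact hne k
        _ = 1 := Finset.prod_const_one
    constructor <;> nlinarith
end

section
/- Let p ≥ 3 be an integer and let f_p : [0,1] → [0,1] be defined by f_p(x) = 1 - x^{p-1}. If τ_0 ∈ (0, α_p) and τ_{m+1} = f_p(τ_m) for all m ∈ ℕ, then the subsequence (τ_{2m})_{m∈ℕ} converges to 0 and the subsequence (τ_{2m+1})_{m∈ℕ} converges to 1. Moreover f_p is a decreasing bijection of [0,1] onto itself. -/
/-!
With `q = p - 1` and `f x = 1 - x ^ q`, the map `f ∘ f` fixes `0`, `α` and `1`, and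
`G x = x - f (f x)` has derivative `1 - q² (x (1 - x ^ q)) ^ (q - 1)`. Since `x (1 - x ^ q)` is
strictly concave, this derivative is strictly quasiconvex on `[0, 1]`. If `G x₀ ≤ 0` for some
`x₀ ∈ (0, α)`, the mean value theorem on `[0, x₀]` and on `[α, 1]` gives points where `G' ≤ 0`,
hence `G' < 0` on `[x₀, α]` and `G x₀ > G α = 0`. So `f (f x) < x` on `(0, α)`: the even iterates
decrease to a fixed point of `f ∘ f` in `[0, α)`, which can only be `0`.
-/

open Set Filter Topology

theorem StrictConcaveOn.one_sub_mul_pow_lt_max {a b c : ℝ} {w : ℝ → ℝ}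
    (hw : StrictConcaveOn ℝ (Icc a b) w) (hw₀ : ∀ x ∈ Icc a b, 0 ≤ w x) {n : ℕ} (hn : n ≠ 0)
    (hc : 0 < c) :
    ∀ x ∈ Icc a b, ∀ y ∈ Icc a b, ∀ z ∈ Ioo x y,
      1 - c * w z ^ n < max (1 - c * w x ^ n) (1 - c * w y ^ n) := by
  intro x hx y hy z hz
  have hxy : x < y := hz.1.trans hz.2
  have hmin := hw.lt_on_openSegment hx hy hxy.ne (by rwa [openSegment_eq_Ioo hxy])
  rcases min_lt_iff.1 hmin with h | h
  · have := pow_lt_pow_left₀ h (hw₀ x hx) hn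
    exact lt_max_of_lt_left (by nlinarith)
  · have := pow_lt_pow_left₀ h (hw₀ y hy) hn
    exact lt_max_of_lt_right (by nlinarith)

/-- `hD` says that the derivative `D` is strictly quasiconvex on `[a, b]`. -/
theorem lt_of_hasDerivAt_of_eq_of_eq {G D : ℝ → ℝ} {a m b : ℝ}
    (hG : ∀ x ∈ Icc a b, HasDerivAt G (D x) x)
    (hD : ∀ x ∈ Icc a b, ∀ y ∈ Icc a b, ∀ z ∈ Ioo x y, D z < max (D x) (D y))
    (hGa : G a = G m) (hGb : G b = G m) (hmb : m < b) {x₀ : ℝ} (hx₀ : x₀ ∈ Ioo a m) :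
    G m < G x₀ := by
  have hGc : ContinuousOn G (Icc a b) := fun x hx ↦ (hG x hx).continuousAt.continuousWithinAt
  have hx₀b : x₀ < b := hx₀.2.trans hmb
  by_contra! hle
  obtain ⟨s, hs, hDs⟩ := exists_hasDerivAt_eq_slope G D hx₀.1
    (hGc.mono (Icc_subset_Icc le_rfl hx₀b.le)) fun x hx ↦ hG x ⟨hx.1.le, hx.2.trans hx₀b |>.le⟩
  obtain ⟨u, hu, hDu⟩ := exists_hasDerivAt_eq_slope G D hmb
    (hGc.mono (Icc_subset_Icc (hx₀.1.trans hx₀.2).le le_rfl))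
    fun x hx ↦ hG x ⟨(hx₀.1.trans hx₀.2).trans hx.1 |>.le, hx.2.le⟩
  have hDs₀ : D s ≤ 0 := hDs ▸ div_nonpos_of_nonpos_of_nonneg (by linarith) (by linarith [hx₀.1])
  have hDu₀ : D u = 0 := by rw [hDu, hGb, sub_self, zero_div]
  have hs_mem : s ∈ Icc a b := ⟨hs.1.le, (hs.2.trans hx₀b).le⟩
  have hu_mem : u ∈ Icc a b := ⟨(hx₀.1.trans hx₀.2).trans hu.1 |>.le, hu.2.le⟩
  have hanti : StrictAntiOn G (Icc x₀ m) := by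
    refine strictAntiOn_of_hasDerivWithinAt_neg (f' := D) (convex_Icc _ _)
      (hGc.mono (Icc_subset_Icc hx₀.1.le hmb.le)) (fun x hx ↦ ?_) fun x hx ↦ ?_
    · rw [interior_Icc] at hx
      exact (hG x ⟨hx₀.1.trans hx.1 |>.le, hx.2.trans hmb |>.le⟩).hasDerivWithinAt
    · rw [interior_Icc] at hx
      have := hD s hs_mem u hu_mem x ⟨hs.2.trans hx.1, hx.2.trans hu.1⟩
      exact this.trans_le (max_le hDs₀ hDu₀.le)
  exact hle.not_gt (hanti (left_mem_Icc.2 hx₀.2.le) (right_mem_Icc.2 hx₀.2.le) hx₀.2)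

theorem tendsto_of_mem_Ioo_of_succ_eq {g : ℝ → ℝ} {a b : ℝ} (hg : Continuous g)
    (hg_lt : ∀ x ∈ Ioo a b, g x ∈ Ioo a x) {u : ℕ → ℝ} (hu₀ : u 0 ∈ Ioo a b)
    (hu : ∀ n, u (n + 1) = g (u n)) : Tendsto u atTop (𝓝 a) := by
  have hmem : ∀ n, u n ∈ Ioo a b := by
    intro n
    induction n with
    | zero => exact hu₀
    | succ n ih =>
      rw [hu n]
      exact ⟨(hg_lt _ ih).1, (hg_lt _ ih).2.trans ih.2⟩
  have hanti : Antitone u :=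
    antitone_nat_of_succ_le fun n ↦ (hu n ▸ (hg_lt _ (hmem n)).2).le
  have hbdd : BddBelow (range u) := ⟨a, forall_mem_range.2 fun n ↦ (hmem n).1.le⟩
  have hlim := tendsto_atTop_ciInf hanti hbdd
  set L := ⨅ n, u n
  have haL : a ≤ L := le_ciInf fun n ↦ (hmem n).1.le
  have hLb : L < b := (ciInf_le hbdd 0).trans_lt (hmem 0).2
  have hfix : g L = L := by
    refine tendsto_nhds_unique ((hg.tendsto L).comp hlim) ?_
    simpa only [Function.comp_def, ← hu] using (tendsto_add_atTop_iff_nat 1).2 hlim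
  rcases haL.eq_or_lt with h | h
  · rwa [h]
  · exact absurd (hg_lt L ⟨h, hLb⟩).2 hfix.ge.not_gt

theorem strictAntiOn_one_sub_pow {q : ℕ} (hq : q ≠ 0) :
    StrictAntiOn (fun x : ℝ ↦ 1 - x ^ q) (Ici 0) :=
  fun _ hx _ _ hxy ↦ sub_lt_sub_left (pow_lt_pow_left₀ hxy hx hq) 1

theorem bijOn_one_sub_pow {q : ℕ} (hq : q ≠ 0) :
    BijOn (fun x : ℝ ↦ 1 - x ^ q) (Icc 0 1) (Icc 0 1) := by
  refine ⟨fun x hx ↦ ?_, ((strictAntiOn_one_sub_pow hq).mono Icc_subset_Ici_self).injOn, ?_⟩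
  · exact ⟨sub_nonneg.2 (pow_le_one₀ hx.1 hx.2), sub_le_self _ (pow_nonneg hx.1 q)⟩
  · simpa [SurjOn, zero_pow hq] using
      intermediate_value_Icc' (f := fun x : ℝ ↦ 1 - x ^ q) (zero_le_one' ℝ) (by fun_prop)

theorem strictConcaveOn_mul_one_sub_pow {q : ℕ} (hq : q ≠ 0) :
    StrictConcaveOn ℝ (Ici 0) fun x : ℝ ↦ x * (1 - x ^ q) := by
  have h : (fun x : ℝ ↦ x * (1 - x ^ q)) = id - fun x ↦ x ^ (q + 1) := by
    funext x
    simp only [Pi.sub_apply, id_eq]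
    ring
  rw [h]
  exact (concaveOn_id (convex_Ici 0)).sub_strictConvexOn (strictConvexOn_pow (by omega))

theorem hasDerivAt_one_sub_pow_pow_add_sub (q : ℕ) (x : ℝ) :
    HasDerivAt (fun x : ℝ ↦ (1 - x ^ q) ^ q + x - 1)
      (1 - (q : ℝ) ^ 2 * (x * (1 - x ^ q)) ^ (q - 1)) x := by
  have h := ((((hasDerivAt_pow q x).const_sub 1).pow q).add (hasDerivAt_id x)).sub_const 1
  refine h.congr_deriv ?_
  rw [mul_pow]
  ring

theorem one_sub_one_sub_pow_pow_lt {q : ℕ} (hq : 2 ≤ q) {α : ℝ} (hα : α ∈ Ioo (0 : ℝ) 1)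
    (hroot : α ^ q + α - 1 = 0) {x : ℝ} (hx : x ∈ Ioo 0 α) : 1 - (1 - x ^ q) ^ q < x := by
  have hq₀ : q ≠ 0 := by omega
  have hw : StrictConcaveOn ℝ (Icc 0 1) fun x : ℝ ↦ x * (1 - x ^ q) :=
    (strictConcaveOn_mul_one_sub_pow hq₀).subset Icc_subset_Ici_self (convex_Icc 0 1)
  have hw₀ : ∀ x ∈ Icc (0 : ℝ) 1, 0 ≤ x * (1 - x ^ q) :=
    fun x hx ↦ mul_nonneg hx.1 (sub_nonneg.2 (pow_le_one₀ hx.1 hx.2))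
  have hGα : (1 - α ^ q) ^ q + α - 1 = 0 := by
    rw [show 1 - α ^ q = α by linarith]
    linarith
  have := lt_of_hasDerivAt_of_eq_of_eq (fun x _ ↦ hasDerivAt_one_sub_pow_pow_add_sub q x)
    (hw.one_sub_mul_pow_lt_max hw₀ (by omega) (by positivity))
    (by simp [hGα, hq₀]) (by simp [hGα, hq₀]) hα.2 hx
  linarith

theorem f_iteration_dynamics (p : ℕ) (hp : 3 ≤ p) (α : ℝ)
    (hα : α ∈ Set.Ioo (0 : ℝ) 1) (hroot : α ^ (p - 1) + α - 1 = 0)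
    (f : ℝ → ℝ) (hf : ∀ x : ℝ, f x = 1 - x ^ (p - 1))
    (τ : ℕ → ℝ) (hτ0 : τ 0 ∈ Set.Ioo (0 : ℝ) α)
    (hτ : ∀ m : ℕ, τ (m + 1) = f (τ m)) :
    Filter.Tendsto (fun m : ℕ => τ (2 * m)) Filter.atTop (nhds 0) ∧
    Filter.Tendsto (fun m : ℕ => τ (2 * m + 1)) Filter.atTop (nhds 1) ∧
    StrictAntiOn f (Set.Icc (0 : ℝ) 1) ∧
    Set.BijOn f (Set.Icc (0 : ℝ) 1) (Set.Icc (0 : ℝ) 1) := by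
  obtain rfl : f = fun x ↦ 1 - x ^ (p - 1) := funext hf
  have hq : p - 1 ≠ 0 := by omega
  have hfc : Continuous fun x : ℝ ↦ 1 - x ^ (p - 1) := continuous_const.sub (continuous_pow _)
  have hanti : StrictAntiOn (fun x : ℝ ↦ 1 - x ^ (p - 1)) (Icc 0 1) :=
    (strictAntiOn_one_sub_pow hq).mono Icc_subset_Ici_self
  have hfα : 1 - α ^ (p - 1) = α := by linarith
  have hmaps : MapsTo (fun x : ℝ ↦ 1 - x ^ (p - 1)) (Ioo 0 α) (Ioo α 1) := by
    simpa [hfα, hq] using (hanti.mono (Icc_subset_Icc_right hα.2.le)).mapsTo_Ioo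
  have hmaps' : MapsTo (fun x : ℝ ↦ 1 - x ^ (p - 1)) (Ioo α 1) (Ioo 0 α) := by
    simpa [hfα] using (hanti.mono (Icc_subset_Icc_left hα.1.le)).mapsTo_Ioo
  have heven : Tendsto (fun m ↦ τ (2 * m)) atTop (𝓝 0) :=
    tendsto_of_mem_Ioo_of_succ_eq (hfc.comp hfc)
      (fun x hx ↦ ⟨(hmaps' (hmaps hx)).1, one_sub_one_sub_pow_pow_lt (by omega) hα hroot hx⟩)
      hτ0 fun m ↦ by rw [show 2 * (m + 1) = 2 * m + 1 + 1 by ring, hτ, hτ]; rfl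
  refine ⟨heven, ?_, hanti, bijOn_one_sub_pow hq⟩
  simpa [hτ, zero_pow hq, Function.comp_def] using (hfc.tendsto 0).comp heven
end
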